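/- arXiv:2201.03784 — 8 statements merged into one kernel-verified Lean document; each statement's English description precedes it below -/
import Mathlib

section
/- Let E = {(e^{i,t})_{i∈N}, p̄^t}_{t∈T} be a data set and let P = {p^{i,t}}_{(i,t)∈N×T} be any heterogenous prices with a stable distribution with respect to the price indices. Then E is rationalizable with heterogenous preferences if and only if, for each i ∈ N, there is a strictly increasing, continuous utility function u^i: ℝ^K_+ → ℝ such that for each t ∈ T, u^i(x(e^{i,t}, p^{i,t})) ≥ u^i(x) for all x ∈ B(p^{i,t}, m^{i,t}). -/
open Filter Set MeasureTheory

noncomputable section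

/-- The inner product `p·x = ∑ k, p k * x k`. -/
def dotp {K : ℕ} (p x : Fin K → ℝ) : ℝ := ∑ k, p k * x k

/-- The implied bundle `x(e,p) = (e_k / p_k)_k`. -/
def demandOf {K : ℕ} (e p : Fin K → ℝ) : Fin K → ℝ := fun k => e k / p k

/-- The budget set `B(p,m) = {x ∈ ℝ^K_+ : p·x ≤ m}`. -/
def budget {K : ℕ} (p : Fin K → ℝ) (m : ℝ) : Set (Fin K → ℝ) :=
  {x | (∀ k, 0 ≤ x k) ∧ dotp p x ≤ m}

/-- A utility function on `ℝ^K_+`: continuous and strictly increasing. -/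
def IsUtility {K : ℕ} (u : (Fin K → ℝ) → ℝ) : Prop :=
  ContinuousOn u {x | ∀ k, 0 ≤ x k} ∧
  ∀ x y : Fin K → ℝ, (∀ k, 0 ≤ x k) → (∀ k, 0 ≤ y k) →
    (∀ k, x k ≤ y k) → (∃ k, x k < y k) → u x < u y

/-- Basic data-set conditions: expenditures are nonnegative with positive total,
and price indices are strictly positive. -/
def IsDataset {N T K : ℕ} (e : Fin N → Fin T → Fin K → ℝ)
    (pbar : Fin T → Fin K → ℝ) : Prop :=
  (∀ i t k, 0 ≤ e i t k) ∧ (∀ i t, 0 < ∑ k, e i t k) ∧ (∀ t k, 0 < pbar t k)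

/-- Heterogenous prices `p` rationalize the data set: there is a common utility function `u`
such that each consumer's implied bundle is optimal in the idiosyncratic budget set. -/
def PricesRationalize {N T K : ℕ} (e : Fin N → Fin T → Fin K → ℝ)
    (p : Fin N → Fin T → Fin K → ℝ) : Prop :=
  ∃ u : (Fin K → ℝ) → ℝ, IsUtility u ∧
    ∀ i t, ∀ x ∈ budget (p i t) (∑ k, e i t k), u x ≤ u (demandOf (e i t) (p i t))

/-- The data set is rationalizable with heterogenous preferences. -/
def HetPrefRationalize {N T K : ℕ} (e : Fin N → Fin T → Fin K → ℝ)
    (pbar : Fin T → Fin K → ℝ) : Prop :=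
  ∃ u : Fin N → (Fin K → ℝ) → ℝ, (∀ i, IsUtility (u i)) ∧
    ∀ i t, ∀ x ∈ budget (pbar t) (∑ k, e i t k), u i x ≤ u i (demandOf (e i t) (pbar t))

/-! Raising the price of good `k` by the factor `c k` amounts to measuring that good in units of
`1 / c k`: the map `x ↦ c * x` carries the budget set `B(c * q, m)` onto `B(q, m)` and the implied
bundle at prices `c * q` to the one at `q`. Hence `u ↦ u (c * ·)` transports rationalizations from
the price indices to the stable prices `λ_i * p̄`, and `c = λ_i⁻¹` transports them back. -/

def Rationalizes {ι : Type*} {K : ℕ} (u : (Fin K → ℝ) → ℝ) (e q : ι → Fin K → ℝ) : Prop :=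
  ∀ t, ∀ x ∈ budget (q t) (∑ k, e t k), u x ≤ u (demandOf (e t) (q t))

section Rescaling

variable {K : ℕ} {c : Fin K → ℝ}

lemma IsUtility.comp_mul {u : (Fin K → ℝ) → ℝ} (hu : IsUtility u) (hc : ∀ k, 0 < c k) :
    IsUtility (fun x => u (c * x)) := by
  have hnonneg : ∀ x : Fin K → ℝ, (∀ k, 0 ≤ x k) → ∀ k, 0 ≤ (c * x) k :=
    fun x hx k => mul_nonneg (hc k).le (hx k)
  refine ⟨hu.1.comp (continuous_const.mul continuous_id).continuousOn hnonneg, ?_⟩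
  rintro x y hx hy hxy ⟨k, hk⟩
  exact hu.2 _ _ (hnonneg x hx) (hnonneg y hy)
    (fun j => mul_le_mul_of_nonneg_left (hxy j) (hc j).le) ⟨k, mul_lt_mul_of_pos_left hk (hc k)⟩

lemma dotp_mul_left_eq_dotp_mul_right (q x : Fin K → ℝ) : dotp (c * q) x = dotp q (c * x) := by
  simp only [dotp, Pi.mul_apply]
  exact Finset.sum_congr rfl fun k _ => by ring

lemma mem_budget_mul_iff (hc : ∀ k, 0 < c k) {q x : Fin K → ℝ} {m : ℝ} :
    x ∈ budget (c * q) m ↔ c * x ∈ budget q m := by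
  have hnonneg : (∀ k, 0 ≤ x k) ↔ ∀ k, 0 ≤ (c * x) k :=
    forall_congr' fun k => (mul_nonneg_iff_of_pos_left (hc k)).symm
  simp only [budget, Set.mem_ofPred_eq, hnonneg, dotp_mul_left_eq_dotp_mul_right]

lemma mul_demandOf_mul (hc : ∀ k, c k ≠ 0) (e q : Fin K → ℝ) :
    c * demandOf e (c * q) = demandOf e q := by
  funext k
  simp only [demandOf, Pi.mul_apply]
  rw [div_mul_eq_div_div_swap, mul_div_cancel₀ _ (hc k)]

lemma Rationalizes.comp_mul {ι : Type*} {u : (Fin K → ℝ) → ℝ} {e q : ι → Fin K → ℝ}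
    (h : Rationalizes u e q) (hc : ∀ k, 0 < c k) :
    Rationalizes (fun x => u (c * x)) e (fun t => c * q t) := by
  intro t x hx
  dsimp only at hx ⊢
  rw [mul_demandOf_mul (fun k => (hc k).ne')]
  exact h t _ ((mem_budget_mul_iff hc).1 hx)

end Rescaling

theorem stable_prices_indistinguishable_general {N T K : ℕ}
    (e : Fin N → Fin T → Fin K → ℝ) (pbar : Fin T → Fin K → ℝ)
    (lam : Fin N → Fin K → ℝ) (hlam : ∀ i k, 0 < lam i k)
    (p : Fin N → Fin T → Fin K → ℝ)
    (hp : ∀ i t k, p i t k = lam i k * pbar t k) :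
    HetPrefRationalize e pbar ↔
      ∀ i : Fin N, ∃ u : (Fin K → ℝ) → ℝ, IsUtility u ∧
        ∀ t, ∀ x ∈ budget (p i t) (∑ k, e i t k),
          u x ≤ u (demandOf (e i t) (p i t)) := by
  have hp_eq : ∀ i, p i = fun t => lam i * pbar t := fun i => funext fun t => funext (hp i t)
  have hlam_inv : ∀ i k, 0 < (lam i)⁻¹ k := fun i k => inv_pos.2 (hlam i k)
  have hpbar_eq : ∀ i, pbar = fun t => (lam i)⁻¹ * p i t := fun i => by
    funext t k
    simp only [hp, Pi.mul_apply, Pi.inv_apply, inv_mul_cancel_left₀ (hlam i k).ne']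
  constructor
  · rintro ⟨u, hu, hopt⟩ i
    refine ⟨_, (hu i).comp_mul (hlam i), ?_⟩
    rw [hp_eq i]
    exact Rationalizes.comp_mul (hopt i) (hlam i)
  · intro h
    choose u hu hopt using h
    refine ⟨fun i x => u i ((lam i)⁻¹ * x), fun i => (hu i).comp_mul (hlam_inv i), fun i => ?_⟩
    rw [hpbar_eq i]
    exact Rationalizes.comp_mul (hopt i) (hlam_inv i)

/-- Proposition 3: for any stable price distribution
`p^{i,t}_k = λ_{i,k} p̄^t_k`, the data set is rationalizable with heterogenous
preferences iff each consumer's data, evaluated at her idiosyncratic prices,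
is rationalizable. -/
theorem stable_prices_indistinguishable {N T K : ℕ}
    (e : Fin N → Fin T → Fin K → ℝ) (pbar : Fin T → Fin K → ℝ)
    (hds : IsDataset e pbar)
    (lam : Fin N → Fin K → ℝ) (hlam : ∀ i k, 0 < lam i k)
    (p : Fin N → Fin T → Fin K → ℝ)
    (hp : ∀ i t k, p i t k = lam i k * pbar t k) :
    HetPrefRationalize e pbar ↔
      ∀ i : Fin N, ∃ u : (Fin K → ℝ) → ℝ, IsUtility u ∧
        ∀ t, ∀ x ∈ budget (p i t) (∑ k, e i t k),
          u x ≤ u (demandOf (e i t) (p i t)) :=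
  stable_prices_indistinguishable_general e pbar lam hlam p hp
end
end

section
/- Let E = {(e^{i,t})_{i∈N}, p̄^t}_{t∈T} be a data set and R ⊆ K a nonempty subset such that e^{i,t}_k > 0 for all (i,t) ∈ N×T and all k ∈ R. Then E is rationalizable with heterogenous preferences if and only if E is rationalizable with heterogenous preferences drawn from an R-scale family. -/
open Filter Set MeasureTheory

noncomputable section

/-- Scale the coordinates of `x` lying in `R` by `β`, leaving the others unchanged. -/
def scaleR {K : ℕ} (R : Finset (Fin K)) (β : ℝ) (x : Fin K → ℝ) : Fin K → ℝ :=
  fun k => if k ∈ R then β * x k else x k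

/-- The data set is rationalizable with heterogenous preferences drawn from an
`R`-scale family: a common strictly increasing, concave, continuous `U` and
scales `β i > 0` such that each consumer maximizes `x ↦ U(β_i x_R, x_{-R})`. -/
def RScaleRationalize {N T K : ℕ} (e : Fin N → Fin T → Fin K → ℝ)
    (pbar : Fin T → Fin K → ℝ) (R : Finset (Fin K)) : Prop :=
  ∃ (β : Fin N → ℝ) (U : (Fin K → ℝ) → ℝ), (∀ i, 0 < β i) ∧ IsUtility U ∧
    ConcaveOn ℝ {x : Fin K → ℝ | ∀ k, 0 ≤ x k} U ∧
    ∀ i t, ∀ x ∈ budget (pbar t) (∑ k, e i t k),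
      U (scaleR R (β i) x) ≤ U (scaleR R (β i) (demandOf (e i t) (pbar t)))

namespace HetAux

noncomputable def sig (x : ℝ) : ℝ := x / (1 + |x|)

lemma one_add_abs_pos (x : ℝ) : 0 < 1 + |x| := by positivity

lemma sig_strictMono : StrictMono sig := by
  intro x y hxy
  unfold sig
  rw [div_lt_div_iff₀ (one_add_abs_pos x) (one_add_abs_pos y)]
  rcases abs_cases x with ⟨hx, _⟩ | ⟨hx, _⟩ <;> rcases abs_cases y with ⟨hy, _⟩ | ⟨hy, _⟩ <;>
    nlinarith [abs_nonneg x, abs_nonneg y]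

lemma abs_sig_lt_one (x : ℝ) : |sig x| < 1 := by
  unfold sig
  rw [abs_div, abs_of_pos (one_add_abs_pos x), div_lt_one (one_add_abs_pos x)]
  linarith [abs_nonneg x]

lemma convex_nonneg {K : ℕ} : Convex ℝ {x : Fin K → ℝ | ∀ k, 0 ≤ x k} := by
  intro x hx y hy a b ha hb hab k
  simpa using add_nonneg (mul_nonneg ha (hx k)) (mul_nonneg hb (hy k))

lemma continuous_finset_inf' {α ι : Type*} [TopologicalSpace α] {s : Finset ι} (hs : s.Nonempty)
    {f : ι → α → ℝ} (hf : ∀ i, Continuous (f i)) :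
    Continuous fun x => s.inf' hs fun i => f i x := by
  induction hs using Finset.Nonempty.cons_induction with
  | singleton i => exact hf i
  | cons i s hi hs ih =>
    have : (fun x => (Finset.cons i s hi).inf' (Finset.cons_nonempty hi) fun j => f j x)
        = fun x => min (f i x) (s.inf' hs fun j => f j x) := by
      funext x; exact Finset.inf'_cons hs (fun j => f j x)
    rw [this]
    exact (hf i).min ih

lemma dotp_linear {K : ℕ} (p x y : Fin K → ℝ) (a b : ℝ) :
    dotp p (a • x + b • y) = a * dotp p x + b * dotp p y := by
  unfold dotp
  rw [Finset.mul_sum, Finset.mul_sum, ← Finset.sum_add_distrib]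
  refine Finset.sum_congr rfl fun k _ => ?_
  simp only [Pi.add_apply, Pi.smul_apply, smul_eq_mul]
  ring

lemma dotp_lt {K : ℕ} {p x y : Fin K → ℝ} (hp : ∀ k, 0 < p k)
    (hle : ∀ k, x k ≤ y k) (hlt : ∃ k, x k < y k) : dotp p x < dotp p y := by
  obtain ⟨k0, hk0⟩ := hlt
  exact Finset.sum_lt_sum (fun k _ => mul_le_mul_of_nonneg_left (hle k) (hp k).le)
    ⟨k0, Finset.mem_univ k0, mul_lt_mul_of_pos_left hk0 (hp k0)⟩

lemma isUtility_sum {K : ℕ} : IsUtility (fun x : Fin K → ℝ => ∑ k, x k) := by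
  constructor
  · exact (continuous_finset_sum _ fun k _ => continuous_apply k).continuousOn
  · rintro x y hx hy hle ⟨k, hk⟩
    exact Finset.sum_lt_sum (fun j _ => hle j) ⟨k, Finset.mem_univ k, hk⟩

lemma concaveOn_sum {K : ℕ} : ConcaveOn ℝ {x : Fin K → ℝ | ∀ k, 0 ≤ x k}
    (fun x => ∑ k, x k) := by
  refine ⟨convex_nonneg, fun x hx y hy a b ha hb hab => ?_⟩
  simp only [smul_eq_mul, Pi.add_apply, Pi.smul_apply]
  rw [Finset.sum_add_distrib, ← Finset.mul_sum, ← Finset.mul_sum]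

set_option maxHeartbeats 1000000 in
lemma rScale_of_hetPref {N T K : ℕ}
    (e : Fin N → Fin T → Fin K → ℝ) (pbar : Fin T → Fin K → ℝ)
    (hds : IsDataset e pbar) (R : Finset (Fin K)) (hR : R.Nonempty)
    (hpos : ∀ i t, ∀ k ∈ R, 0 < e i t k)
    (h : HetPrefRationalize e pbar) : RScaleRationalize e pbar R := by
  obtain ⟨u, hu, hopt⟩ := h
  obtain ⟨he, hm, hp⟩ := hds
  by_cases hNT : Nonempty (Fin N × Fin T)
  swap
  · exact ⟨fun _ => 1, fun x => ∑ k, x k, fun i => one_pos, isUtility_sum, concaveOn_sum,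
      fun i t => absurd ⟨i, t⟩ hNT⟩
  obtain ⟨a0⟩ := hNT
  have hAne : (Finset.univ : Finset (Fin N × Fin T)).Nonempty := ⟨a0, Finset.mem_univ _⟩
  obtain ⟨k0, hk0R⟩ := hR
  set X : Fin N → Fin T → Fin K → ℝ := fun i t => demandOf (e i t) (pbar t) with hXdef
  set mm : Fin N → Fin T → ℝ := fun i t => ∑ k, e i t k with hmmdef
  have hXnn : ∀ i t k, 0 ≤ X i t k := fun i t k => div_nonneg (he i t k) (hp t k).le
  have hXposR : ∀ i t, ∀ k ∈ R, 0 < X i t k := fun i t k hk => div_pos (hpos i t k hk) (hp t k)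
  -- Amin
  set Af : Fin T × Fin N × Fin T → ℝ := fun p => ∑ k ∈ R, pbar p.1 k * X p.2.1 p.2.2 k with hAfdef
  have hAfpos : ∀ p, 0 < Af p := fun p =>
    Finset.sum_pos (fun k hk => mul_pos (hp p.1 k) (hXposR p.2.1 p.2.2 k hk)) ⟨k0, hk0R⟩
  have hNTinst : Nonempty (Fin N × Fin T) := ⟨a0⟩
  have hTNTinst : Nonempty (Fin T × Fin N × Fin T) := ⟨(a0.2, a0)⟩
  obtain ⟨p0, hp0⟩ := Finite.exists_min Af
  set Amin := Af p0 with hAmindef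
  have hAminpos : 0 < Amin := hAfpos p0
  have hAminle : ∀ (t : Fin T) (j : Fin N) (s : Fin T), Amin ≤ ∑ k ∈ R, pbar t k * X j s k := by
    intro t j s
    have h1 := hp0 (t, j, s)
    rw [hAfdef] at h1
    exact h1
  -- Mmax
  obtain ⟨b0, hb0⟩ := Finite.exists_max (fun a : Fin N × Fin T => mm a.1 a.2)
  set Mmax := mm b0.1 b0.2 with hMmaxdef
  have hMge : ∀ i t, mm i t ≤ Mmax := fun i t => hb0 (i, t)
  have hMpos : 0 < Mmax := lt_of_lt_of_le (hm a0.1 a0.2) (hMge a0.1 a0.2)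
  -- c and β
  set c : ℝ := Mmax / Amin + 1 with hcdef
  have hc1 : 1 ≤ c := by
    have : 0 ≤ Mmax / Amin := div_nonneg hMpos.le hAminpos.le
    rw [hcdef]
    linarith
  have hcpos : 0 < c := lt_of_lt_of_le one_pos hc1
  have hcM : ∀ i t, mm i t < c * Amin := by
    intro i t
    have h2 : c * Amin = Mmax + Amin := by
      rw [hcdef]; field_simp
    rw [h2]
    exact lt_of_le_of_lt (hMge i t) (by linarith)
  set β : Fin N → ℝ := fun i => c ^ (i : ℕ) with hβdef
  have hβpos : ∀ i, 0 < β i := fun i => pow_pos hcpos _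
  have hβr : ∀ i j : Fin N, (i : ℕ) < (j : ℕ) → c * β i ≤ β j := by
    intro i j hij
    calc c * β i = c ^ ((i : ℕ) + 1) := by rw [hβdef]; ring
    _ ≤ c ^ (j : ℕ) := pow_le_pow_right₀ hc1 hij
  -- prices q
  set q : Fin N → Fin T → Fin K → ℝ :=
    fun i t k => if k ∈ R then pbar t k / β i else pbar t k with hqdef
  have hqpos : ∀ i t, ∀ k, 0 < q i t k := by
    intro i t k
    rw [hqdef]; dsimp only
    split
    · exact div_pos (hp t k) (hβpos i)
    · exact hp t k
  have hL1 : ∀ i t (x : Fin K → ℝ), dotp (q i t) (scaleR R (β i) x) = dotp (pbar t) x := by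
    intro i t x
    unfold dotp
    refine Finset.sum_congr rfl fun k _ => ?_
    rw [hqdef]; unfold scaleR; dsimp only
    split
    · rw [div_mul_eq_mul_div, div_eq_iff (hβpos i).ne']; ring
    · rfl
  have hL2 : ∀ (i j : Fin N) (t : Fin T) (x : Fin K → ℝ), (∀ k, 0 ≤ x k) →
      β j / β i * ∑ k ∈ R, pbar t k * x k ≤ dotp (q i t) (scaleR R (β j) x) := by
    intro i j t x hx
    have h1 : ∑ k ∈ R, q i t k * scaleR R (β j) x k
        = β j / β i * ∑ k ∈ R, pbar t k * x k := by
      rw [Finset.mul_sum]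
      refine Finset.sum_congr rfl fun k hk => ?_
      rw [hqdef]; unfold scaleR; dsimp only
      rw [if_pos hk, if_pos hk]
      field_simp
    rw [← h1]
    unfold dotp
    refine Finset.sum_le_sum_of_subset_of_nonneg (Finset.subset_univ R) fun k _ _ => ?_
    have hsnn : 0 ≤ scaleR R (β j) x k := by
      unfold scaleR; split
      · exact mul_nonneg (hβpos j).le (hx k)
      · exact hx k
    exact mul_nonneg (hqpos i t k).le hsnn
  set y : Fin N × Fin T → Fin K → ℝ := fun a => scaleR R (β a.1) (X a.1 a.2) with hydef
  set D : Fin N × Fin T → Fin N × Fin T → ℝ :=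
    fun a b => dotp (q a.1 a.2) (y b) - mm a.1 a.2 with hDdef
  have hDsame : ∀ i t s, D (i, t) (i, s) = dotp (pbar t) (X i s) - mm i t := by
    intro i t s
    rw [hDdef]; dsimp only
    rw [hydef]; dsimp only
    rw [hL1]
  have hDcross : ∀ (a b : Fin N × Fin T), (a.1 : ℕ) < (b.1 : ℕ) → 0 < D a b := by
    intro a b hab
    have h2 := hL2 a.1 b.1 a.2 (X b.1 b.2) (hXnn b.1 b.2)
    have h3 : c ≤ β b.1 / β a.1 := (le_div_iff₀ (hβpos a.1)).2 (hβr a.1 b.1 hab)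
    have h4 : c * Amin ≤ β b.1 / β a.1 * ∑ k ∈ R, pbar a.2 k * X b.1 b.2 k :=
      mul_le_mul h3 (hAminle a.2 b.1 b.2) hAminpos.le (le_trans hcpos.le h3)
    have h5 : mm a.1 a.2 < dotp (q a.1 a.2) (y b) := by
      have hyb : y b = scaleR R (β b.1) (X b.1 b.2) := by rw [hydef]
      rw [hyb]
      calc mm a.1 a.2 < c * Amin := hcM a.1 a.2
      _ ≤ β b.1 / β a.1 * ∑ k ∈ R, pbar a.2 k * X b.1 b.2 k := h4
      _ ≤ _ := h2
    rw [hDdef]; dsimp only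
    linarith
  set v : Fin N × Fin T → ℝ := fun a => 2 * ((a.1 : ℕ) : ℝ) + sig (u a.1 (X a.1 a.2)) with hvdef
  have hsigbd : ∀ x : ℝ, -1 < sig x ∧ sig x < 1 := fun x => abs_lt.1 (abs_sig_lt_one x)
  have hvcross : ∀ a b : Fin N × Fin T, (b.1 : ℕ) < (a.1 : ℕ) → v b < v a := by
    intro a b hba
    have h1 : ((b.1 : ℕ) : ℝ) + 1 ≤ ((a.1 : ℕ) : ℝ) := by exact_mod_cast hba
    have h2 := (hsigbd (u a.1 (X a.1 a.2))).1
    have h3 := (hsigbd (u b.1 (X b.1 b.2))).2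
    rw [hvdef]; dsimp only
    linarith
  have hsame_le : ∀ (i : Fin N) (t s : Fin T), dotp (pbar t) (X i s) ≤ mm i t →
      u i (X i s) ≤ u i (X i t) := by
    intro i t s hle
    exact hopt i t (X i s) ⟨hXnn i s, hle⟩
  have hsame_lt : ∀ (i : Fin N) (t s : Fin T), dotp (pbar t) (X i s) < mm i t →
      u i (X i s) < u i (X i t) := by
    intro i t s hlt
    have hP : 0 < ∑ k, pbar t k := Finset.sum_pos (fun k _ => hp t k) ⟨k0, Finset.mem_univ k0⟩
    set δ := (mm i t - dotp (pbar t) (X i s)) / (∑ k, pbar t k) with hδdef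
    have hδpos : 0 < δ := div_pos (by linarith) hP
    have hδP : δ * (∑ k, pbar t k) = mm i t - dotp (pbar t) (X i s) :=
      div_mul_cancel₀ _ hP.ne'
    have hx' : (fun k => X i s k + δ) ∈ budget (pbar t) (mm i t) := by
      constructor
      · intro k; exact add_nonneg (hXnn i s k) hδpos.le
      · show dotp (pbar t) (fun k => X i s k + δ) ≤ mm i t
        have hcalc : dotp (pbar t) (fun k => X i s k + δ)
            = dotp (pbar t) (X i s) + δ * ∑ k, pbar t k := by
          unfold dotp
          rw [Finset.mul_sum, ← Finset.sum_add_distrib]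
          exact Finset.sum_congr rfl fun k _ => by ring
        rw [hcalc, hδP]
        linarith
    have h1 : u i (X i s) < u i (fun k => X i s k + δ) :=
      (hu i).2 _ _ (hXnn i s) (fun k => add_nonneg (hXnn i s k) hδpos.le)
        (fun k => by linarith) ⟨k0, by linarith⟩
    exact lt_of_lt_of_le h1 (hopt i t _ hx')
  have keyLe : ∀ a b : Fin N × Fin T, D a b ≤ 0 → v b ≤ v a := by
    intro a b hD
    rcases lt_trichotomy (a.1 : ℕ) (b.1 : ℕ) with hc' | hc' | hc'
    · exact absurd hD (not_le.2 (hDcross a b hc'))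
    · obtain ⟨i, t⟩ := a
      obtain ⟨j, s⟩ := b
      dsimp only at hc'
      have hij : i = j := Fin.ext hc'
      subst hij
      rw [hDsame i t s] at hD
      have h1 := hsame_le i t s (by linarith)
      rw [hvdef]; dsimp only
      have h2 := sig_strictMono.monotone h1
      linarith
    · exact (hvcross a b hc').le
  have keyLt : ∀ a b : Fin N × Fin T, D a b < 0 → v b < v a := by
    intro a b hD
    rcases lt_trichotomy (a.1 : ℕ) (b.1 : ℕ) with hc' | hc' | hc'
    · exact absurd hD.le (not_le.2 (hDcross a b hc'))
    · obtain ⟨i, t⟩ := a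
      obtain ⟨j, s⟩ := b
      dsimp only at hc'
      have hij : i = j := Fin.ext hc'
      subst hij
      rw [hDsame i t s] at hD
      have h1 := hsame_lt i t s (by linarith)
      rw [hvdef]; dsimp only
      have h2 := sig_strictMono h1
      linarith
    · exact hvcross a b hc'
  have hDpos_of_vlt : ∀ a b, v a < v b → 0 < D a b := by
    intro a b hv
    by_contra hD
    exact absurd (keyLe a b (not_lt.1 hD)) (not_le.2 hv)
  have hDnn_of_veq : ∀ a b, v a = v b → 0 ≤ D a b := by
    intro a b hv
    by_contra hD
    have h1 := keyLt a b (not_le.1 hD)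
    rw [hv] at h1
    exact lt_irrefl _ h1
  -- d
  obtain ⟨ab1, hab1⟩ := Finite.exists_min (fun ab : (Fin N × Fin T) × (Fin N × Fin T) =>
    if v ab.1 < v ab.2 then D ab.1 ab.2 else 1)
  set d := (if v ab1.1 < v ab1.2 then D ab1.1 ab1.2 else 1) with hddef
  have hdpos : 0 < d := by
    rw [hddef]
    split
    · exact hDpos_of_vlt ab1.1 ab1.2 (by assumption)
    · exact one_pos
  have hdle : ∀ a b, v a < v b → d ≤ D a b := by
    intro a b hv
    have h1 := hab1 ((a, b))
    rw [if_pos hv] at h1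
    exact h1
  -- Cc
  obtain ⟨ab2, hab2⟩ := Finite.exists_max (fun ab : (Fin N × Fin T) × (Fin N × Fin T) =>
    |D ab.1 ab.2|)
  set Cc := |D ab2.1 ab2.2| with hCcdef
  have hCnn : 0 ≤ Cc := abs_nonneg _
  have hCge : ∀ a b, -Cc ≤ D a b := by
    intro a b
    have h1 : |D a b| ≤ Cc := hab2 ((a, b))
    linarith [(abs_le.1 h1).1]
  -- epsilon
  set ε := d / (2 * d + 2 * Cc) with hεdef
  have hden : 0 < 2 * d + 2 * Cc := by linarith
  have hεpos : 0 < ε := div_pos hdpos hden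
  have hεhalf : ε ≤ 1 / 2 := by
    rw [hεdef, div_le_div_iff₀ hden two_pos]
    linarith
  have hεlt1 : ε < 1 := lt_of_le_of_lt hεhalf (by norm_num)
  have hεd : ε * (2 * d + 2 * Cc) = d := by rw [hεdef]; exact div_mul_cancel₀ _ hden.ne'
  have hεd' : 2 * (ε * d) + 2 * (ε * Cc) = d := by linear_combination hεd
  have hkey : ε * Cc ≤ (1 - ε) * d := by
    nlinarith [hεd', mul_nonneg hεpos.le hdpos.le, mul_nonneg hεpos.le hCnn]
  -- ranks
  set r : Fin N × Fin T → ℕ :=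
    fun a => (Finset.univ.filter (fun b : Fin N × Fin T => v b < v a)).card with hrdef
  have hr_eq : ∀ a b, v a = v b → r a = r b := by
    intro a b hv
    rw [hrdef]; dsimp only; rw [hv]
  have hr_lt : ∀ a b, v a < v b → r a < r b := by
    intro a b hv
    refine Finset.card_lt_card ?_
    rw [Finset.ssubset_def]
    constructor
    · intro w hw
      rw [Finset.mem_filter] at hw ⊢
      exact ⟨hw.1, lt_trans hw.2 hv⟩
    · intro hsub
      have hva : a ∈ Finset.univ.filter (fun b' : Fin N × Fin T => v b' < v b) :=
        Finset.mem_filter.2 ⟨Finset.mem_univ a, hv⟩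
      exact lt_irrefl _ (Finset.mem_filter.1 (hsub hva)).2
  set φ : Fin N × Fin T → ℝ := fun a => -(ε ^ r a) with hφdef
  set lam : Fin N × Fin T → ℝ := fun a => ε ^ r a / d with hlamdef
  have hlampos : ∀ a, 0 < lam a := fun a => div_pos (pow_pos hεpos _) hdpos
  have hAfriat : ∀ a b, φ b - φ a ≤ lam a * D a b := by
    intro a b
    rw [hφdef, hlamdef]; dsimp only
    rcases lt_trichotomy (v a) (v b) with hv | hv | hv
    · have hD := hdle a b hv
      have h1 : ε ^ r a - ε ^ r b ≤ ε ^ r a := by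
        have := pow_nonneg hεpos.le (r b); linarith
      have h2 : ε ^ r a ≤ ε ^ r a / d * D a b := by
        rw [div_mul_eq_mul_div, le_div_iff₀ hdpos]
        calc ε ^ r a * d ≤ ε ^ r a * D a b :=
          mul_le_mul_of_nonneg_left hD (pow_nonneg hεpos.le _)
        _ = _ := rfl
      linarith
    · rw [hr_eq a b hv]
      have hD := hDnn_of_veq a b hv
      have h1 : 0 ≤ ε ^ r b / d * D a b :=
        mul_nonneg (div_pos (pow_pos hεpos _) hdpos).le hD
      linarith
    · have hrb : r b + 1 ≤ r a := hr_lt b a hv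
      have hpow : ε ^ r a ≤ ε * ε ^ r b := by
        calc ε ^ r a ≤ ε ^ (r b + 1) := pow_le_pow_of_le_one hεpos.le hεlt1.le hrb
        _ = ε * ε ^ r b := by ring
      have hD := hCge a b
      rw [div_mul_eq_mul_div, le_div_iff₀ hdpos]
      have hQnn : (0:ℝ) ≤ ε ^ r b := pow_nonneg hεpos.le _
      have hPnn : (0:ℝ) ≤ ε ^ r a := pow_nonneg hεpos.le _
      have h1 : ε ^ r a * (-Cc) ≤ ε ^ r a * D a b := mul_le_mul_of_nonneg_left hD hPnn
      have h2 : ε ^ r a * (d + Cc) ≤ ε * ε ^ r b * (d + Cc) :=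
        mul_le_mul_of_nonneg_right hpow (by linarith)
      have h3 : ε ^ r b * (ε * Cc) ≤ ε ^ r b * ((1 - ε) * d) :=
        mul_le_mul_of_nonneg_left hkey hQnn
      nlinarith [h1, h2, h3]
  -- the common utility
  set f : Fin N × Fin T → (Fin K → ℝ) → ℝ :=
    fun a z => φ a + lam a * (dotp (q a.1 a.2) z - mm a.1 a.2) with hfdef
  set U : (Fin K → ℝ) → ℝ := fun z => Finset.univ.inf' hAne (fun a => f a z) with hUdef
  have hUle : ∀ (z : Fin K → ℝ) a, U z ≤ f a z := fun z a =>
    Finset.inf'_le _ (Finset.mem_univ a)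
  have hfcont : ∀ a, Continuous (f a) := by
    intro a
    rw [hfdef]; dsimp only
    have hdc : Continuous (fun z : Fin K → ℝ => dotp (q a.1 a.2) z) := by
      unfold dotp
      exact continuous_finset_sum _ fun k _ => continuous_const.mul (continuous_apply k)
    exact continuous_const.add (continuous_const.mul (hdc.sub continuous_const))
  have hUcont : Continuous U := by
    rw [hUdef]
    exact continuous_finset_inf' hAne hfcont
  have hUmono : ∀ x y : Fin K → ℝ, (∀ k, 0 ≤ x k) → (∀ k, 0 ≤ y k) →
      (∀ k, x k ≤ y k) → (∃ k, x k < y k) → U x < U y := by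
    intro x y hx hy hle hlt
    obtain ⟨b, _, hb⟩ := Finset.exists_mem_eq_inf' hAne (fun a => f a y)
    calc U x ≤ f b x := hUle x b
    _ < f b y := by
        rw [hfdef]; dsimp only
        have h1 := dotp_lt (hqpos b.1 b.2) hle hlt
        have h2 := hlampos b
        nlinarith
    _ = U y := hb.symm
  have hUconc : ConcaveOn ℝ {x : Fin K → ℝ | ∀ k, 0 ≤ x k} U := by
    refine ⟨convex_nonneg, fun x hx yy hy a b ha hb hab => ?_⟩
    refine Finset.le_inf' hAne _ fun cc _ => ?_
    have h1 : a • U x + b • U yy ≤ a * f cc x + b * f cc yy := by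
      simp only [smul_eq_mul]
      have h2 := mul_le_mul_of_nonneg_left (hUle x cc) ha
      have h3 := mul_le_mul_of_nonneg_left (hUle yy cc) hb
      linarith
    refine le_trans h1 (le_of_eq ?_)
    rw [hfdef]; dsimp only
    rw [dotp_linear]
    linear_combination (φ cc - lam cc * mm cc.1 cc.2) * hab
  refine ⟨β, U, hβpos, ⟨hUcont.continuousOn, hUmono⟩, hUconc, ?_⟩
  intro i t x hx
  obtain ⟨hxnn, hxb⟩ := hx
  have hup : U (scaleR R (β i) x) ≤ φ (i, t) := by
    refine le_trans (hUle _ (i, t)) ?_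
    rw [hfdef]; dsimp only
    rw [hL1 i t x]
    have h2 : lam (i, t) * (dotp (pbar t) x - mm i t) ≤ lam (i, t) * 0 :=
      mul_le_mul_of_nonneg_left (by linarith) (hlampos (i, t)).le
    rw [mul_zero] at h2
    linarith
  have hdown : φ (i, t) ≤ U (y (i, t)) := by
    refine Finset.le_inf' hAne _ fun bb _ => ?_
    have h1 := hAfriat bb (i, t)
    rw [hDdef] at h1; dsimp only at h1
    rw [hfdef]; dsimp only
    linarith
  calc U (scaleR R (β i) x) ≤ φ (i, t) := hup
  _ ≤ U (y (i, t)) := hdown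
  _ = U (scaleR R (β i) (demandOf (e i t) (pbar t))) := rfl


lemma scaleR_nonneg {K : ℕ} {R : Finset (Fin K)} {b : ℝ} (hb : 0 ≤ b) {x : Fin K → ℝ}
    (hx : ∀ k, 0 ≤ x k) : ∀ k, 0 ≤ scaleR R b x k := by
  intro k; unfold scaleR
  split
  · exact mul_nonneg hb (hx k)
  · exact hx k

lemma scaleR_mono {K : ℕ} {R : Finset (Fin K)} {b : ℝ} (hb : 0 ≤ b) {x y : Fin K → ℝ}
    (hxy : ∀ k, x k ≤ y k) : ∀ k, scaleR R b x k ≤ scaleR R b y k := by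
  intro k; unfold scaleR
  split
  · exact mul_le_mul_of_nonneg_left (hxy k) hb
  · exact hxy k

lemma scaleR_strict {K : ℕ} {R : Finset (Fin K)} {b : ℝ} (hb : 0 < b) {x y : Fin K → ℝ}
    {k : Fin K} (hk : x k < y k) : scaleR R b x k < scaleR R b y k := by
  unfold scaleR
  split
  · exact mul_lt_mul_of_pos_left hk hb
  · exact hk

lemma continuous_scaleR {K : ℕ} (R : Finset (Fin K)) (b : ℝ) : Continuous (scaleR R b) := by
  refine continuous_pi fun k => ?_
  unfold scaleR
  by_cases h : k ∈ R <;> simp only [h, if_true, if_false]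
  · exact continuous_const.mul (continuous_apply k)
  · exact continuous_apply k

lemma hetPref_of_rScale {N T K : ℕ}
    (e : Fin N → Fin T → Fin K → ℝ) (pbar : Fin T → Fin K → ℝ) (R : Finset (Fin K))
    (h : RScaleRationalize e pbar R) : HetPrefRationalize e pbar := by
  obtain ⟨β, U, hβ, ⟨hUc, hUm⟩, hconc, hopt⟩ := h
  refine ⟨fun i x => U (scaleR R (β i) x), fun i => ⟨?_, ?_⟩, fun i t x hx => hopt i t x hx⟩
  · refine ContinuousOn.comp hUc (continuous_scaleR R (β i)).continuousOn ?_
    intro x hx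
    exact scaleR_nonneg (hβ i).le hx
  · rintro x y hx hy hle ⟨k, hk⟩
    exact hUm _ _ (scaleR_nonneg (hβ i).le hx) (scaleR_nonneg (hβ i).le hy)
      (scaleR_mono (hβ i).le hle) ⟨k, scaleR_strict (hβ i) hk⟩

end HetAux

/-- Proposition 4, (i) ⇔ (ii): rationalizability with heterogenous
preferences is equivalent to rationalizability with heterogenous preferences drawn
from an `R`-scale family, provided expenditure on every good in `R` is strictly
positive at all observations. -/
theorem hetPref_iff_rScale {N T K : ℕ}
    (e : Fin N → Fin T → Fin K → ℝ) (pbar : Fin T → Fin K → ℝ)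
    (hds : IsDataset e pbar)
    (R : Finset (Fin K)) (hR : R.Nonempty)
    (hpos : ∀ i t, ∀ k ∈ R, 0 < e i t k) :
    HetPrefRationalize e pbar ↔ RScaleRationalize e pbar R :=
  ⟨HetAux.rScale_of_hetPref e pbar hds R hR hpos, HetAux.hetPref_of_rScale e pbar R⟩
end
end

section
/- Let E = {(e^{i,t})_{i∈N}, p̄^t}_{t∈T} be a data set and R ⊆ K a nonempty subset such that e^{i,t}_k > 0 for all (i,t) ∈ N×T and all k ∈ R, and let W: ℝ^N_{++} → ℝ_{++} be a price aggregator that is homogeneous of degree 1. If E is rationalizable with heterogenous preferences, then there exist real numbers λ_1,…,λ_N > 0 such that the heterogenous prices P = {p^{i,t}} defined by p^{i,t}_k = λ_i p̄^t_k for k ∈ R and p^{i,t}_k = p̄^t_k for k ∉ R satisfy W((p^{i,t}_k)_{i∈N}) = p̄^t_k for every (k,t) (consistency in expectation) and rationalize E. -/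
open Filter Set MeasureTheory

noncomputable section

/-- A price aggregator: strictly increasing in each coordinate, continuous on the positive
orthant, positive-valued there, and `W(p, …, p) = p`. -/
def IsAggregator {N : ℕ} (W : (Fin N → ℝ) → ℝ) : Prop :=
  (∀ p : Fin N → ℝ, (∀ i, 0 < p i) → 0 < W p) ∧
  (∀ p q : Fin N → ℝ, (∀ i, 0 < p i) → (∀ i, 0 < q i) →
    (∀ i, p i ≤ q i) → (∃ i, p i < q i) → W p < W q) ∧
  ContinuousOn W {p | ∀ i, 0 < p i} ∧
  (∀ c : ℝ, 0 < c → W (fun _ => c) = c)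

namespace SPAux

/-- the squashing function mapping ℝ into (0,1) -/
def sq (v : ℝ) : ℝ := 1/2 + Real.arctan v / Real.pi

lemma sq_pos (v : ℝ) : 0 < sq v := by
  have hπ := Real.pi_pos
  have h := Real.neg_pi_div_two_lt_arctan v
  have : -(1/2 : ℝ) < Real.arctan v / Real.pi := by
    rw [lt_div_iff₀ hπ]; nlinarith
  unfold sq; linarith

lemma sq_lt_one (v : ℝ) : sq v < 1 := by
  have hπ := Real.pi_pos
  have h := Real.arctan_lt_pi_div_two v
  have : Real.arctan v / Real.pi < 1/2 := by
    rw [div_lt_iff₀ hπ]; nlinarith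
  unfold sq; linarith

lemma sq_strictMono : StrictMono sq := by
  intro a b hab
  have h := Real.arctan_strictMono hab
  have hπ := Real.pi_pos
  unfold sq
  have : Real.arctan a / Real.pi < Real.arctan b / Real.pi :=
    div_lt_div_of_pos_right h hπ
  linarith

lemma sq_continuous : Continuous sq :=
  continuous_const.add (Real.continuous_arctan.div_const _)

/-- recursively built scaling factors -/
def lamF (q : ℕ → ℝ) : ℕ → ℝ := fun n => Nat.rec 1 (fun m acc => acc * q m) n

lemma lamF_zero (q : ℕ → ℝ) : lamF q 0 = 1 := rfl

lemma lamF_succ (q : ℕ → ℝ) (n : ℕ) : lamF q (n+1) = lamF q n * q n := rfl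

lemma lamF_pos (q : ℕ → ℝ) (hq : ∀ n, 0 < q n) : ∀ n, 0 < lamF q n := by
  intro n
  induction n with
  | zero => norm_num [lamF_zero]
  | succ m ih => rw [lamF_succ]; exact mul_pos ih (hq m)

/-- Abel-summation nonnegativity lemma -/
lemma abel_nonneg (M : ℕ) (Δ G : ℕ → ℝ) (h0 : Δ 0 = 0) (hN : Δ (M+1) = 0)
    (hΔ : ∀ n, 0 ≤ Δ n) (hG : ∀ n, n + 1 ≤ M → G (n+1) ≤ G n) :
    0 ≤ ∑ j ∈ Finset.range (M+1), (Δ (j+1) - Δ j) * G j := by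
  have e1 : ∑ j ∈ Finset.range (M+1), (Δ (j+1) - Δ j) * G j
      = ∑ j ∈ Finset.range (M+1), Δ (j+1) * G j
        - ∑ j ∈ Finset.range (M+1), Δ j * G j := by
    rw [← Finset.sum_sub_distrib]; congr 1; ext j; ring
  have e2 : ∑ j ∈ Finset.range (M+1), Δ (j+1) * G j
      = ∑ j ∈ Finset.range M, Δ (j+1) * G j + Δ (M+1) * G M :=
    Finset.sum_range_succ _ _
  have e3 : ∑ j ∈ Finset.range (M+1), Δ j * G j
      = ∑ j ∈ Finset.range M, Δ (j+1) * G (j+1) + Δ 0 * G 0 :=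
    Finset.sum_range_succ' _ _
  rw [e1, e2, e3, h0, hN]
  have : (0:ℝ) ≤ ∑ j ∈ Finset.range M, Δ (j+1) * G j
      - ∑ j ∈ Finset.range M, Δ (j+1) * G (j+1) := by
    rw [← Finset.sum_sub_distrib]
    apply Finset.sum_nonneg
    intro j hj
    have hj' : j + 1 ≤ M := Finset.mem_range.mp hj
    have := hG j hj'
    have := hΔ (j+1)
    nlinarith
  linarith

/-- slab weight boundary functions -/
noncomputable def bdF (Nn : ℕ) (Mb cb : ℕ → ℝ) (n : ℕ) (s : ℝ) : ℝ :=
  if n = 0 then 0 else if Nn ≤ n then 1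
  else max 0 (min 1 ((s - Mb n) / (cb (n-1) - Mb n)))

variable {Nn : ℕ} {Mb cb : ℕ → ℝ}

lemma bdF_zero (s : ℝ) : bdF Nn Mb cb 0 s = 0 := by simp [bdF]

lemma bdF_of_ge {n : ℕ} (hn : Nn ≤ n) (hN : 0 < Nn) (s : ℝ) : bdF Nn Mb cb n s = 1 := by
  have : n ≠ 0 := by omega
  simp [bdF, this, hn]

lemma bdF_nonneg (n : ℕ) (s : ℝ) : 0 ≤ bdF Nn Mb cb n s := by
  unfold bdF
  split_ifs <;> simp

lemma bdF_le_one (n : ℕ) (s : ℝ) : bdF Nn Mb cb n s ≤ 1 := by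
  unfold bdF
  split_ifs with h1 h2
  · norm_num
  · exact le_rfl
  · exact max_le (by norm_num) (min_le_left _ _)

lemma Mb_anti (hgap : ∀ n, Mb (n+1) < cb n) (hcbMb : ∀ n, cb n ≤ Mb n) : Antitone Mb :=
  antitone_nat_of_succ_le fun n => (hgap n).le.trans (hcbMb n)

lemma cb_anti (hgap : ∀ n, Mb (n+1) < cb n) (hcbMb : ∀ n, cb n ≤ Mb n) : Antitone cb :=
  antitone_nat_of_succ_le fun n => (hcbMb (n+1)).trans (hgap n).le

lemma bdF_denom_pos (hgap : ∀ n, Mb (n+1) < cb n) {n : ℕ} (hn : 1 ≤ n) :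
    0 < cb (n-1) - Mb n := by
  have h := hgap (n-1)
  have hn' : n - 1 + 1 = n := by omega
  rw [hn'] at h
  linarith

lemma bdF_mono (hgap : ∀ n, Mb (n+1) < cb n) (n : ℕ) : Monotone (bdF Nn Mb cb n) := by
  intro s s' hss
  unfold bdF
  split_ifs with h1 h2
  · exact le_rfl
  · exact le_rfl
  · have hd : 0 < cb (n-1) - Mb n := bdF_denom_pos hgap (by omega)
    refine max_le_max le_rfl (min_le_min le_rfl ?_)
    exact (div_le_div_iff_of_pos_right hd).mpr (by linarith)

lemma bdF_eq_zero (hgap : ∀ n, Mb (n+1) < cb n) {n : ℕ} (hn : 1 ≤ n) (hnN : n < Nn)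
    {s : ℝ} (hs : s ≤ Mb n) : bdF Nn Mb cb n s = 0 := by
  have hne : n ≠ 0 := by omega
  have hle : ¬ Nn ≤ n := by omega
  have hd : 0 < cb (n-1) - Mb n := bdF_denom_pos hgap hn
  unfold bdF
  rw [if_neg hne, if_neg hle]
  have hr : (s - Mb n) / (cb (n-1) - Mb n) ≤ 0 :=
    div_nonpos_of_nonpos_of_nonneg (by linarith) hd.le
  have : min 1 ((s - Mb n) / (cb (n-1) - Mb n)) ≤ 0 := le_trans (min_le_right _ _) hr
  exact max_eq_left this

lemma bdF_eq_one (hgap : ∀ n, Mb (n+1) < cb n) {n : ℕ} (hn : 1 ≤ n) (hnN : n < Nn)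
    {s : ℝ} (hs : cb (n-1) ≤ s) : bdF Nn Mb cb n s = 1 := by
  have hne : n ≠ 0 := by omega
  have hle : ¬ Nn ≤ n := by omega
  have hd : 0 < cb (n-1) - Mb n := bdF_denom_pos hgap hn
  unfold bdF
  rw [if_neg hne, if_neg hle]
  have hr : (1:ℝ) ≤ (s - Mb n) / (cb (n-1) - Mb n) := by
    rw [le_div_iff₀ hd]; linarith
  rw [min_eq_left hr]
  exact max_eq_right (by norm_num)

lemma bdF_le_succ (hgap : ∀ n, Mb (n+1) < cb n) (hcbMb : ∀ n, cb n ≤ Mb n)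
    (hN : 0 < Nn) (n : ℕ) (s : ℝ) :
    bdF Nn Mb cb n s ≤ bdF Nn Mb cb (n+1) s := by
  rcases Nat.eq_zero_or_pos n with h0 | h1
  · subst h0; rw [bdF_zero]; exact bdF_nonneg _ _
  by_cases hnN : Nn ≤ n
  · rw [bdF_of_ge hnN hN, bdF_of_ge (by omega) hN]
  push_neg at hnN
  by_cases hsn : s ≤ Mb n
  · rw [bdF_eq_zero hgap h1 hnN hsn]; exact bdF_nonneg _ _
  push_neg at hsn
  by_cases hnN1 : Nn ≤ n + 1
  · rw [bdF_of_ge hnN1 hN]; exact bdF_le_one _ _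
  push_neg at hnN1
  have hcbs : cb n ≤ s := le_of_lt (lt_of_le_of_lt (hcbMb n) hsn)
  rw [bdF_eq_one hgap (by omega) hnN1 (by simpa using hcbs)]
  exact bdF_le_one _ _

lemma bdF_continuous (n : ℕ) : Continuous (bdF Nn Mb cb n) := by
  unfold bdF
  split_ifs
  · exact continuous_const
  · exact continuous_const
  · exact continuous_const.max (continuous_const.min
      ((continuous_id.sub continuous_const).div_const _))


lemma sum_isUtility {K : ℕ} : IsUtility (fun x : Fin K → ℝ => ∑ k, x k) := by
  constructor
  · exact (continuous_finset_sum _ (fun k _ => continuous_apply k)).continuousOn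
  · intro x y _ _ hle hlt
    obtain ⟨k, hk⟩ := hlt
    exact Finset.sum_lt_sum (fun j _ => hle j) ⟨k, Finset.mem_univ k, hk⟩

end SPAux
/-- Proposition 4, (i) ⇒ (iii): if the data set is rationalizable with
heterogenous preferences, then there are scalars `λ_i > 0` such that the stable
heterogenous prices, scaled by `λ_i` on the goods in `R` and equal to the price
indices elsewhere, are consistent in expectation with respect to any linearly
homogeneous aggregator `W` and rationalize the data set. -/
theorem hetPref_implies_stable_prices {N T K : ℕ}
    (e : Fin N → Fin T → Fin K → ℝ) (pbar : Fin T → Fin K → ℝ)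
    (hds : IsDataset e pbar)
    (R : Finset (Fin K)) (hR : R.Nonempty)
    (hpos : ∀ i t, ∀ k ∈ R, 0 < e i t k)
    (W : (Fin N → ℝ) → ℝ) (hW : IsAggregator W)
    (hhom : ∀ c : ℝ, 0 < c → ∀ q : Fin N → ℝ, (∀ i, 0 < q i) →
      W (fun i => c * q i) = c * W q)
    (hrat : HetPrefRationalize e pbar) :
    ∃ lam : Fin N → ℝ, (∀ i, 0 < lam i) ∧
      (∀ t k, W (fun i => if k ∈ R then lam i * pbar t k else pbar t k) = pbar t k) ∧
      PricesRationalize e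
        (fun i t k => if k ∈ R then lam i * pbar t k else pbar t k) := by
  classical
  rcases Nat.eq_zero_or_pos T with hT | hT
  · subst hT
    exact ⟨fun _ => 1, fun _ => one_pos, fun t => t.elim0,
      ⟨_, SPAux.sum_isUtility, fun i t => t.elim0⟩⟩
  rcases Nat.eq_zero_or_pos N with hN | hN
  · subst hN
    refine ⟨fun i => i.elim0, fun i => i.elim0, ?_, ?_⟩
    · intro t k
      have he : (fun i : Fin 0 => if k ∈ R then (i.elim0 : ℝ) * pbar t k else pbar t k)
          = fun _ : Fin 0 => pbar t k := funext fun i => i.elim0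
      rw [he]
      exact hW.2.2.2 _ (hds.2.2 t k)
    · exact ⟨_, SPAux.sum_isUtility, fun i => i.elim0⟩
  -- main case
  obtain ⟨k0, hk0⟩ := hR
  obtain ⟨uu, huu, hopt⟩ := hrat
  haveI : Nonempty (Fin T) := ⟨⟨0, hT⟩⟩
  have hUne : (Finset.univ : Finset (Fin T)).Nonempty := Finset.univ_nonempty
  set A : ℕ → ℝ := fun n =>
    if h : n < N then Finset.univ.sup' hUne (fun t => (∑ k, e ⟨n,h⟩ t k) / pbar t k0)
    else 1 with hA_def
  set C : ℕ → ℝ := fun n =>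
    if h : n < N then Finset.univ.inf' hUne (fun t => e ⟨n,h⟩ t k0 / pbar t k0)
    else 1 with hC_def
  have hCpos : ∀ n, 0 < C n := by
    intro n
    rw [hC_def]
    dsimp only
    split_ifs with h
    · rw [Finset.lt_inf'_iff]
      intro t _
      exact div_pos (hpos ⟨n,h⟩ t k0 hk0) (hds.2.2 t k0)
    · norm_num
  have hApos : ∀ n, 0 < A n := by
    intro n
    rw [hA_def]
    dsimp only
    split_ifs with h
    · rw [Finset.lt_sup'_iff]
      exact ⟨Classical.arbitrary _, Finset.mem_univ _,
        div_pos (hds.2.1 _ _) (hds.2.2 _ k0)⟩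
    · norm_num
  have hek0le : ∀ (i : Fin N) (t : Fin T), e i t k0 ≤ ∑ k, e i t k := by
    intro i t
    exact Finset.single_le_sum (fun k _ => hds.1 i t k) (Finset.mem_univ k0)
  have hCle : ∀ (i : Fin N) (t : Fin T), C i.val ≤ e i t k0 / pbar t k0 := by
    intro i t
    rw [hC_def]
    dsimp only
    rw [dif_pos i.isLt]
    exact Finset.inf'_le (fun t => e ⟨i.val, i.isLt⟩ t k0 / pbar t k0) (Finset.mem_univ t)
  have hAle : ∀ (i : Fin N) (t : Fin T), (∑ k, e i t k) / pbar t k0 ≤ A i.val := by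
    intro i t
    rw [hA_def]
    dsimp only
    rw [dif_pos i.isLt]
    exact Finset.le_sup' (fun t => (∑ k, e ⟨i.val, i.isLt⟩ t k) / pbar t k0)
      (Finset.mem_univ t)
  have hCA : ∀ n, C n ≤ A n := by
    intro n
    by_cases h : n < N
    · have t0 : Fin T := Classical.arbitrary _
      calc C n ≤ e ⟨n,h⟩ t0 k0 / pbar t0 k0 := hCle ⟨n,h⟩ t0
        _ ≤ (∑ k, e ⟨n,h⟩ t0 k) / pbar t0 k0 := by
            gcongr
            · exact (hds.2.2 t0 k0).le
            · exact hek0le ⟨n,h⟩ t0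
        _ ≤ A n := hAle ⟨n,h⟩ t0
    · rw [hA_def, hC_def]; dsimp only; rw [dif_neg h, dif_neg h]
  set q : ℕ → ℝ := fun n => max 1 (2 * A (n+1) / C n) with hq_def
  have hqpos : ∀ n, 0 < q n := fun n => lt_of_lt_of_le one_pos (le_max_left _ _)
  set lam' : ℕ → ℝ := SPAux.lamF q with hlam'_def
  have hlam'pos : ∀ n, 0 < lam' n := SPAux.lamF_pos q hqpos
  set wl : ℝ := W (fun i : Fin N => lam' i.val) with hwl_def
  have hwl : 0 < wl := hW.1 _ (fun i => hlam'pos _)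
  set Lam : ℕ → ℝ := fun n => lam' n / wl with hLam_def
  have hLampos : ∀ n, 0 < Lam n := fun n => div_pos (hlam'pos n) hwl
  set Mb : ℕ → ℝ := fun n => A n / Lam n with hMb_def
  set cb : ℕ → ℝ := fun n => C n / Lam n with hcb_def
  have hcbMb : ∀ n, cb n ≤ Mb n := by
    intro n
    rw [hMb_def, hcb_def]
    dsimp only
    gcongr
    · exact (hLampos n).le
    · exact hCA n
  have hgap : ∀ n, Mb (n+1) < cb n := by
    intro n
    have h1 : lam' n * (2 * A (n+1) / C n) ≤ lam' (n+1) := by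
      rw [hlam'_def, SPAux.lamF_succ]
      exact mul_le_mul_of_nonneg_left (le_max_right _ _) (hlam'pos n).le
    have hA1 := hApos (n+1)
    have hC0 := hCpos n
    have hl0 := hlam'pos n
    have hl1 := hlam'pos (n+1)
    rw [hMb_def, hcb_def]
    dsimp only
    rw [hLam_def]
    dsimp only
    rw [div_div_eq_mul_div, div_div_eq_mul_div]
    rw [div_lt_div_iff₀ hl1 hl0]
    -- A (n+1) * wl * lam' n < C n * wl * lam' (n+1)
    have key : 2 * (A (n+1) * lam' n) ≤ C n * lam' (n+1) := by
      have h2 : C n * (lam' n * (2 * A (n+1) / C n)) = 2 * (A (n+1) * lam' n) := by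
        field_simp
      nlinarith [mul_le_mul_of_nonneg_left h1 hC0.le]
    nlinarith [mul_pos hA1 hl0, mul_pos hwl (mul_pos hA1 hl0)]
  -- boundary functions
  set bd : ℕ → ℝ → ℝ := SPAux.bdF N Mb cb with hbd_def
  set TT : Fin N → (Fin K → ℝ) → (Fin K → ℝ) :=
    fun j x k => if k ∈ R then Lam j.val * x k else x k with hTT_def
  set aL : ℕ → ℝ := fun n => 2*((N:ℝ) - 1 - n) with haL_def
  set G : Fin N → (Fin K → ℝ) → ℝ :=
    fun j x => aL j.val + SPAux.sq (uu j (TT j x)) with hG_def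
  set u : (Fin K → ℝ) → ℝ :=
    fun x => ∑ j : Fin N, (bd (j.val+1) (x k0) - bd j.val (x k0)) * G j x with hu_def
  -- basic facts about weights
  have hwnn : ∀ (j : Fin N) (s : ℝ), 0 ≤ bd (j.val+1) s - bd j.val s := by
    intro j s
    rw [hbd_def]
    exact sub_nonneg.mpr (SPAux.bdF_le_succ hgap hcbMb hN j.val s)
  have hsumw : ∀ s : ℝ, ∑ j : Fin N, (bd (j.val+1) s - bd j.val s) = 1 := by
    intro s
    rw [hbd_def]
    rw [Fin.sum_univ_eq_sum_range
      (fun n => SPAux.bdF N Mb cb (n+1) s - SPAux.bdF N Mb cb n s) N]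
    rw [Finset.sum_range_sub (fun n => SPAux.bdF N Mb cb n s)]
    rw [SPAux.bdF_of_ge le_rfl hN, SPAux.bdF_zero]
    ring
  have haL_lt : ∀ (j : Fin N) (x : Fin K → ℝ), aL j.val < G j x := by
    intro j x
    rw [hG_def]
    have := SPAux.sq_pos (uu j (TT j x))
    dsimp only
    linarith
  have haL_ub : ∀ (j : Fin N) (x : Fin K → ℝ), G j x < aL j.val + 1 := by
    intro j x
    rw [hG_def]
    have := SPAux.sq_lt_one (uu j (TT j x))
    dsimp only
    linarith
  have haL_anti : ∀ m n : ℕ, m ≤ n → aL n ≤ aL m := by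
    intro m n h
    rw [haL_def]
    dsimp only
    have : (m:ℝ) ≤ n := by exact_mod_cast h
    linarith
  have haL_succ : ∀ n : ℕ, aL (n+1) + 1 = aL n - 1 := by
    intro n
    rw [haL_def]
    dsimp only
    push_cast
    ring
  have hTT0 : ∀ (j : Fin N) (x : Fin K → ℝ), (∀ k, 0 ≤ x k) → (∀ k, 0 ≤ TT j x k) := by
    intro j x hx k
    rw [hTT_def]
    dsimp only
    split_ifs
    · exact mul_nonneg (hLampos _).le (hx k)
    · exact hx k
  have hGstrict : ∀ (j : Fin N) (x y : Fin K → ℝ), (∀ k, 0 ≤ x k) → (∀ k, 0 ≤ y k) →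
      (∀ k, x k ≤ y k) → (∃ k, x k < y k) → G j x < G j y := by
    intro j x y hx hy hle hlt
    have h : uu j (TT j x) < uu j (TT j y) := by
      apply (huu j).2 (TT j x) (TT j y) (hTT0 j x hx) (hTT0 j y hy)
      · intro k
        rw [hTT_def]
        dsimp only
        split_ifs
        · exact mul_le_mul_of_nonneg_left (hle k) (hLampos _).le
        · exact hle k
      · obtain ⟨k, hk⟩ := hlt
        refine ⟨k, ?_⟩
        rw [hTT_def]
        dsimp only
        split_ifs
        · exact (mul_lt_mul_iff_right₀ (hLampos _)).mpr hk
        · exact hk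
    have := SPAux.sq_strictMono h
    rw [hG_def]
    dsimp only
    linarith
  have hTTcont : ∀ j : Fin N, Continuous (TT j) := by
    intro j
    rw [hTT_def]
    dsimp only
    apply continuous_pi
    intro k
    by_cases hkR : k ∈ R
    · simp only [hkR, if_true]; exact continuous_const.mul (continuous_apply k)
    · simpa [hkR] using (continuous_apply k)
  have hGcont : ∀ j : Fin N, ContinuousOn (G j) {x : Fin K → ℝ | ∀ k, 0 ≤ x k} := by
    intro j
    rw [hG_def]
    dsimp only
    apply ContinuousOn.add continuousOn_const
    apply SPAux.sq_continuous.comp_continuousOn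
    apply (huu j).1.comp (hTTcont j).continuousOn
    intro x hx
    exact hTT0 j x hx
  have hucont : ContinuousOn u {x : Fin K → ℝ | ∀ k, 0 ≤ x k} := by
    rw [hu_def]
    apply continuousOn_finset_sum
    intro j _
    apply ContinuousOn.mul ?_ (hGcont j)
    rw [hbd_def]
    exact (((SPAux.bdF_continuous _).comp (continuous_apply k0)).sub
      ((SPAux.bdF_continuous _).comp (continuous_apply k0))).continuousOn
  have humono : ∀ x y : Fin K → ℝ, (∀ k, 0 ≤ x k) → (∀ k, 0 ≤ y k) →
      (∀ k, x k ≤ y k) → (∃ k, x k < y k) → u x < u y := by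
    intro x y hx hy hle hlt
    set G' : ℕ → ℝ := fun n => if h : n < N then G ⟨n,h⟩ x else 0 with hG'_def
    have hG'eq : ∀ j : Fin N, G' j.val = G j x := by
      intro j
      rw [hG'_def]
      dsimp only
      rw [dif_pos j.isLt]
    have step2 : ∑ j : Fin N, (bd (j.val+1) (x k0) - bd j.val (x k0)) * G j x
        ≤ ∑ j : Fin N, (bd (j.val+1) (y k0) - bd j.val (y k0)) * G j x := by
      obtain ⟨M, hM⟩ : ∃ M, N = M + 1 := ⟨N - 1, by omega⟩
      set Δ : ℕ → ℝ := fun n => bd n (y k0) - bd n (x k0) with hΔ_def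
      have habel : 0 ≤ ∑ n ∈ Finset.range (M+1), (Δ (n+1) - Δ n) * G' n := by
        apply SPAux.abel_nonneg
        · rw [hΔ_def]
          dsimp only
          rw [hbd_def, SPAux.bdF_zero, SPAux.bdF_zero]
          ring
        · rw [hΔ_def]
          dsimp only
          rw [← hM, hbd_def, SPAux.bdF_of_ge le_rfl hN, SPAux.bdF_of_ge le_rfl hN]
          ring
        · intro n
          rw [hΔ_def]
          dsimp only
          rw [hbd_def]
          exact sub_nonneg.mpr (SPAux.bdF_mono hgap n (hle k0))
        · intro n hn
          have hn1 : n + 1 < N := by omega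
          have hn0 : n < N := by omega
          rw [hG'_def]
          dsimp only
          rw [dif_pos hn1, dif_pos hn0]
          have h1 := haL_ub ⟨n+1, hn1⟩ x
          have h2 := haL_lt ⟨n, hn0⟩ x
          have h3 := haL_succ n
          simp only at h1 h2
          linarith
      have h1 : ∑ j : Fin N, (bd (j.val+1) (x k0) - bd j.val (x k0)) * G j x
          = ∑ n ∈ Finset.range N, (bd (n+1) (x k0) - bd n (x k0)) * G' n := by
        rw [← Fin.sum_univ_eq_sum_range (fun n => (bd (n+1) (x k0) - bd n (x k0)) * G' n) N]
        exact Finset.sum_congr rfl fun j _ => by rw [hG'eq]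
      have h2 : ∑ j : Fin N, (bd (j.val+1) (y k0) - bd j.val (y k0)) * G j x
          = ∑ n ∈ Finset.range N, (bd (n+1) (y k0) - bd n (y k0)) * G' n := by
        rw [← Fin.sum_univ_eq_sum_range (fun n => (bd (n+1) (y k0) - bd n (y k0)) * G' n) N]
        exact Finset.sum_congr rfl fun j _ => by rw [hG'eq]
      have h3 : ∑ n ∈ Finset.range (M+1), (Δ (n+1) - Δ n) * G' n
          = ∑ n ∈ Finset.range N, (bd (n+1) (y k0) - bd n (y k0)) * G' n
            - ∑ n ∈ Finset.range N, (bd (n+1) (x k0) - bd n (x k0)) * G' n := by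
        rw [← Finset.sum_sub_distrib, hM]
        apply Finset.sum_congr rfl
        intro n _
        rw [hΔ_def]
        ring
      rw [h1, h2]
      rw [h3] at habel
      linarith
    have step1 : ∑ j : Fin N, (bd (j.val+1) (y k0) - bd j.val (y k0)) * G j x
        < ∑ j : Fin N, (bd (j.val+1) (y k0) - bd j.val (y k0)) * G j y := by
      apply Finset.sum_lt_sum
      · intro j _
        exact mul_le_mul_of_nonneg_left (hGstrict j x y hx hy hle hlt).le (hwnn j _)
      · have hex : ∃ j : Fin N, 0 < bd (j.val+1) (y k0) - bd j.val (y k0) := by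
          by_contra hno
          push_neg at hno
          have hz : ∀ j : Fin N, bd (j.val+1) (y k0) - bd j.val (y k0) = 0 :=
            fun j => le_antisymm (hno j) (hwnn j _)
          have hone := hsumw (y k0)
          rw [Finset.sum_congr rfl (fun j _ => hz j)] at hone
          simp at hone
        obtain ⟨j, hj⟩ := hex
        exact ⟨j, Finset.mem_univ j,
          mul_lt_mul_of_pos_left (hGstrict j x y hx hy hle hlt) hj⟩
    rw [hu_def]
    dsimp only
    exact lt_of_le_of_lt step2 step1
  refine ⟨fun i => Lam i.val, fun i => hLampos _, ?_, ?_⟩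
  · -- consistency in expectation
    intro t k
    by_cases hkR : k ∈ R
    · simp only [hkR, if_true]
      have hc : 0 < pbar t k / wl := div_pos (hds.2.2 t k) hwl
      have hh := hhom (pbar t k / wl) hc (fun i : Fin N => lam' i.val) (fun i => hlam'pos _)
      rw [← hwl_def] at hh
      have hfe : (fun i : Fin N => Lam i.val * pbar t k)
          = fun i : Fin N => (pbar t k / wl) * lam' i.val := by
        funext i
        rw [hLam_def]
        dsimp only
        ring
      rw [hfe, hh, div_mul_cancel₀ _ hwl.ne']
    · simp only [hkR, if_false]
      exact hW.2.2.2 _ (hds.2.2 t k)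
  · -- rationalization
    refine ⟨u, ⟨hucont, humono⟩, ?_⟩
    intro i t x hx
    obtain ⟨hx0, hxb⟩ := hx
    set z : Fin K → ℝ := demandOf (e i t)
      (fun k => if k ∈ R then Lam i.val * pbar t k else pbar t k) with hz_def
    have hP : ∀ k, (0:ℝ) < (if k ∈ R then Lam i.val * pbar t k else pbar t k) := by
      intro k
      split_ifs
      · exact mul_pos (hLampos _) (hds.2.2 t k)
      · exact hds.2.2 t k
    have hxb' : ∑ k, (if k ∈ R then Lam i.val * pbar t k else pbar t k) * x k
        ≤ ∑ k, e i t k := by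
      simpa [dotp] using hxb
    have hxk0 : x k0 ≤ Mb i.val := by
      have h1 : (Lam i.val * pbar t k0) * x k0
          ≤ ∑ k, (if k ∈ R then Lam i.val * pbar t k else pbar t k) * x k := by
        have := Finset.single_le_sum
          (f := fun k => (if k ∈ R then Lam i.val * pbar t k else pbar t k) * x k)
          (fun k _ => mul_nonneg (hP k).le (hx0 k)) (Finset.mem_univ k0)
        simpa [hk0] using this
      have h2 : (Lam i.val * pbar t k0) * x k0 ≤ ∑ k, e i t k := le_trans h1 hxb'
      have hA := hAle i t
      have hpb := hds.2.2 t k0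
      have hL := hLampos i.val
      rw [hMb_def]
      dsimp only
      rw [le_div_iff₀ hL]
      rw [div_le_iff₀ hpb] at hA
      nlinarith [h2, hA, hpb, hL]
    have hTTx : TT i x ∈ budget (pbar t) (∑ k, e i t k) := by
      refine ⟨hTT0 i x hx0, ?_⟩
      have heq : dotp (pbar t) (TT i x)
          = ∑ k, (if k ∈ R then Lam i.val * pbar t k else pbar t k) * x k := by
        simp only [dotp]
        apply Finset.sum_congr rfl
        intro k _
        rw [hTT_def]
        dsimp only
        split_ifs
        · ring
        · ring
      rw [heq]
      exact hxb'
    have hTTz : TT i z = demandOf (e i t) (pbar t) := by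
      funext k
      rw [hTT_def, hz_def]
      simp only [demandOf]
      by_cases hkR : k ∈ R
      · simp only [hkR, if_true]
        have hL := (hLampos i.val).ne'
        have hpb := (hds.2.2 t k).ne'
        field_simp
      · simp only [hkR, if_false]
    have hGix : G i x ≤ G i z := by
      have h := hopt i t (TT i x) hTTx
      rw [← hTTz] at h
      have := SPAux.sq_strictMono.monotone h
      rw [hG_def]
      dsimp only
      linarith
    have hz0 : z k0 = (e i t k0 / pbar t k0) / Lam i.val := by
      rw [hz_def]
      simp only [demandOf]
      rw [if_pos hk0, mul_comm, ← div_div]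
    have hzk0a : cb i.val ≤ z k0 := by
      rw [hz0, hcb_def]
      dsimp only
      gcongr
      · exact (hLampos _).le
      · exact hCle i t
    have hzk0b : z k0 ≤ Mb i.val := by
      rw [hz0, hMb_def]
      dsimp only
      gcongr
      · exact (hLampos _).le
      calc e i t k0 / pbar t k0 ≤ (∑ k, e i t k) / pbar t k0 := by
            gcongr
            · exact (hds.2.2 t k0).le
            · exact hek0le i t
        _ ≤ A i.val := hAle i t
    have key_zero : ∀ s : ℝ, s ≤ Mb i.val → ∀ n : ℕ, n ≤ i.val → bd n s = 0 := by
      intro s hs n hn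
      rcases Nat.eq_zero_or_pos n with h0 | h1
      · subst h0
        rw [hbd_def]
        exact SPAux.bdF_zero s
      · rw [hbd_def]
        exact SPAux.bdF_eq_zero hgap h1 (lt_of_le_of_lt hn i.isLt)
          (le_trans hs (SPAux.Mb_anti hgap hcbMb hn))
    have key_one : ∀ s : ℝ, cb i.val ≤ s → ∀ n : ℕ, i.val + 1 ≤ n → bd n s = 1 := by
      intro s hs n hn
      by_cases hNn : N ≤ n
      · rw [hbd_def]
        exact SPAux.bdF_of_ge hNn hN s
      · rw [hbd_def]
        apply SPAux.bdF_eq_one hgap (by omega) (by omega)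
        exact le_trans (SPAux.cb_anti hgap hcbMb (by omega : i.val ≤ n - 1)) hs
    have huz : u z = G i z := by
      rw [hu_def]
      dsimp only
      rw [Finset.sum_eq_single_of_mem i (Finset.mem_univ i)]
      · rw [key_one (z k0) hzk0a (i.val+1) le_rfl, key_zero (z k0) hzk0b i.val le_rfl]
        ring
      · intro j _ hij
        have hne : j.val ≠ i.val := fun h => hij (Fin.ext h)
        rcases lt_or_gt_of_ne hne with h | h
        · rw [key_zero _ hzk0b j.val (by omega), key_zero _ hzk0b (j.val+1) (by omega)]
          ring
        · rw [key_one _ hzk0a j.val (by omega), key_one _ hzk0a (j.val+1) (by omega)]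
          ring
    have hux : u x ≤ G i z := by
      rw [hu_def]
      dsimp only
      calc ∑ j : Fin N, (bd (j.val+1) (x k0) - bd j.val (x k0)) * G j x
          ≤ ∑ j : Fin N, (bd (j.val+1) (x k0) - bd j.val (x k0)) * G i z := by
            apply Finset.sum_le_sum
            intro j _
            rcases lt_trichotomy j.val i.val with h | h | h
            · rw [key_zero _ hxk0 j.val (by omega), key_zero _ hxk0 (j.val+1) (by omega)]
              simp
            · have hj : j = i := Fin.ext h
              subst hj
              exact mul_le_mul_of_nonneg_left hGix (hwnn j _)
            · have hGle : G j x ≤ G i z := by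
                have h1 := haL_ub j x
                have h2 := haL_lt i z
                have h3 := haL_anti (i.val+1) j.val (by omega)
                have h4 := haL_succ i.val
                linarith
              exact mul_le_mul_of_nonneg_left hGle (hwnn j _)
        _ = (∑ j : Fin N, (bd (j.val+1) (x k0) - bd j.val (x k0))) * G i z := by
            rw [Finset.sum_mul]
        _ = G i z := by rw [hsumw]; ring
    show u x ≤ u z
    rw [huz]
    exact hux
end
end

section
/- Let E = {(e^{i,t})_{i∈N}, p̄^t}_{t∈T} be a data set and R ⊆ K a nonempty subset such that e^{i,t}_k > 0 for all (i,t) ∈ N×T and all k ∈ R. Suppose there exist λ_1,…,λ_N > 0 such that the heterogenous prices P = {p^{i,t}} defined by p^{i,t}_k = λ_i p̄^t_k for k ∈ R and p^{i,t}_k = p̄^t_k for k ∉ R rationalize E. Then E is rationalizable with heterogenous preferences drawn from an R-scale family; in fact, the common utility function U that rationalizes E under P works, with scales β_i = 1/λ_i. -/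
open Filter Set MeasureTheory

noncomputable section

section AfriatAux

variable {K : ℕ}

lemma dotp_nonneg {p x : Fin K → ℝ} (hp : ∀ k, 0 ≤ p k) (hx : ∀ k, 0 ≤ x k) :
    0 ≤ dotp p x :=
  Finset.sum_nonneg fun k _ => mul_nonneg (hp k) (hx k)

lemma dotp_lin (p x y : Fin K → ℝ) (a b : ℝ) :
    dotp p (a • x + b • y) = a * dotp p x + b * dotp p y := by
  simp only [dotp, Finset.mul_sum, ← Finset.sum_add_distrib]
  apply Finset.sum_congr rfl
  intro k _
  simp only [Pi.add_apply, Pi.smul_apply, smul_eq_mul]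
  ring

lemma dotp_lt (p x y : Fin K → ℝ) (hp : ∀ k, 0 < p k) (hle : ∀ k, x k ≤ y k)
    (hlt : ∃ k, x k < y k) : dotp p x < dotp p y := by
  obtain ⟨k0, hk0⟩ := hlt
  exact Finset.sum_lt_sum (fun k _ => mul_le_mul_of_nonneg_left (hle k) (hp k).le)
    ⟨k0, Finset.mem_univ _, mul_lt_mul_of_pos_left hk0 (hp k0)⟩

lemma continuous_finset_inf' {A : Type*} {s : Finset A} (hs : s.Nonempty)
    (f : A → (Fin K → ℝ) → ℝ) (hf : ∀ a, Continuous (f a)) :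
    Continuous (fun y => s.inf' hs (fun a => f a y)) := by
  induction hs using Finset.Nonempty.cons_induction with
  | singleton a => simpa only [Finset.inf'_singleton] using hf a
  | cons a s h hs ih =>
      simp only [Finset.inf'_cons hs]
      exact Continuous.min (hf a) ih

/-- Afriat-style construction: a finite data set rationalized by a strictly
increasing utility is rationalized by a concave, continuous, strictly
increasing one (a minimum of affine functions). -/
lemma afriat {A : Type} [Fintype A] [Nonempty A] (k0 : Fin K)
    (p x : A → Fin K → ℝ) (m : A → ℝ)
    (hp : ∀ a k, 0 < p a k) (hx : ∀ a k, 0 ≤ x a k)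
    (hm : ∀ a, dotp (p a) (x a) = m a)
    (u : (Fin K → ℝ) → ℝ)
    (hmono : ∀ y z : Fin K → ℝ, (∀ k, 0 ≤ y k) → (∀ k, 0 ≤ z k) →
      (∀ k, y k ≤ z k) → (∃ k, y k < z k) → u y < u z)
    (hrat : ∀ a, ∀ y ∈ budget (p a) (m a), u y ≤ u (x a)) :
    ∃ U : (Fin K → ℝ) → ℝ, Continuous U ∧
      (∀ y z : Fin K → ℝ, (∀ k, y k ≤ z k) → (∃ k, y k < z k) → U y < U z) ∧
      ConcaveOn ℝ Set.univ U ∧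
      ∀ a, ∀ y ∈ budget (p a) (m a), U y ≤ U (x a) := by
  classical
  -- revealed-preference facts
  have hF1 : ∀ a b, dotp (p b) (x a) ≤ m b → u (x a) ≤ u (x b) := by
    intro a b h
    exact hrat b (x a) ⟨hx a, h⟩
  have hF2 : ∀ a b, dotp (p b) (x a) < m b → u (x a) < u (x b) := by
    intro a b h
    set ε := (m b - dotp (p b) (x a)) / p b k0 with hε
    have hεpos : 0 < ε := div_pos (by linarith) (hp b k0)
    set y := fun k => x a k + if k = k0 then ε else 0 with hy
    have hy0 : ∀ k, 0 ≤ y k := by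
      intro k
      have := hx a k
      simp only [hy]
      split <;> linarith
    have hterm : ∀ k, p b k * y k = p b k * x a k + (if k = k0 then p b k0 * ε else 0) := by
      intro k
      by_cases hk : k = k0
      · subst hk; simp [hy]; ring
      · simp [hy, hk]
    have hdot : dotp (p b) y = m b := by
      simp only [dotp]
      rw [Finset.sum_congr rfl (fun k _ => hterm k), Finset.sum_add_distrib,
        Finset.sum_ite_eq' Finset.univ k0 (fun _ => p b k0 * ε)]
      simp only [Finset.mem_univ, if_true]
      have : p b k0 * ε = m b - dotp (p b) (x a) := by
        rw [hε, mul_comm, div_mul_cancel₀ _ (hp b k0).ne']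
      rw [this]
      simp [dotp]
    have h1 : u (x a) < u y := by
      apply hmono _ _ (hx a) hy0
      · intro k; simp only [hy]; split <;> linarith
      · exact ⟨k0, by simp [hy, hεpos]⟩
    have h2 : u y ≤ u (x b) := hrat b y ⟨hy0, hdot.le⟩
    linarith
  have hG1 : ∀ a b, u (x b) < u (x a) → m b < dotp (p b) (x a) := by
    intro a b h
    by_contra h'
    exact absurd (hF1 a b (not_lt.mp h')) (not_le.mpr h)
  have hG2 : ∀ a b, u (x b) ≤ u (x a) → m b ≤ dotp (p b) (x a) := by
    intro a b h
    by_contra h'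
    exact absurd (hF2 a b (not_le.mp h')) (not_lt.mpr h)
  -- ranks
  obtain ⟨L, r, hrL, hrlt, hreq⟩ :
      ∃ (L : ℕ) (r : A → ℕ), (∀ a, r a < L) ∧
        (∀ a b, u (x a) < u (x b) → r a < r b) ∧
        (∀ a b, u (x a) = u (x b) → r a = r b) := by
    refine ⟨(Finset.univ.image (fun a => u (x a))).card,
      fun a => ((Finset.univ.image (fun a => u (x a))).filter
        (fun v => v < u (x a))).card, ?_, ?_, ?_⟩
    · intro a
      apply Finset.card_lt_card
      refine ⟨Finset.filter_subset _ _, fun hsub => ?_⟩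
      have hmem : u (x a) ∈ Finset.univ.image (fun a => u (x a)) :=
        Finset.mem_image_of_mem _ (Finset.mem_univ a)
      have := hsub hmem
      simp at this
    · intro a b h
      apply Finset.card_lt_card
      constructor
      · intro v hv
        simp only [Finset.mem_filter] at hv ⊢
        exact ⟨hv.1, lt_trans hv.2 h⟩
      · intro hsub
        have hmem : u (x a) ∈ (Finset.univ.image (fun a => u (x a))).filter
            (fun v => v < u (x b)) := by
          simp only [Finset.mem_filter]
          exact ⟨Finset.mem_image_of_mem _ (Finset.mem_univ a), h⟩
        have := hsub hmem
        simp at this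
    · intro a b h
      simp only [h]
  -- minimal positive surplus
  obtain ⟨smin, hsmin_pos, hsmin_le⟩ :
      ∃ s : ℝ, 0 < s ∧ ∀ a b, u (x b) < u (x a) → s ≤ dotp (p b) (x a) - m b := by
    set P : Finset (A × A) := Finset.univ.filter (fun q => u (x q.1) < u (x q.2)) with hP
    refine ⟨(insert 1 (P.image (fun q => dotp (p q.1) (x q.2) - m q.1))).min'
      ⟨1, Finset.mem_insert_self _ _⟩, ?_, ?_⟩
    · apply (Finset.lt_min'_iff _ _).mpr
      intro v hv
      rcases Finset.mem_insert.mp hv with h | h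
      · simp [h]
      · obtain ⟨q, hq, rfl⟩ := Finset.mem_image.mp h
        rw [hP] at hq
        have := (Finset.mem_filter.mp hq).2
        have := hG1 q.2 q.1 this
        linarith
    · intro a b h
      apply Finset.min'_le
      apply Finset.mem_insert_of_mem
      exact Finset.mem_image.mpr ⟨(b, a), by rw [hP]; simp [h], rfl⟩
  -- maximal income
  obtain ⟨Mmax, hM1, hMm_le⟩ : ∃ M : ℝ, 1 ≤ M ∧ ∀ a, m a ≤ M := by
    refine ⟨(insert 1 (Finset.univ.image m)).max' ⟨1, Finset.mem_insert_self _ _⟩, ?_, ?_⟩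
    · exact Finset.le_max' _ _ (Finset.mem_insert_self _ _)
    · intro a
      exact Finset.le_max' _ _
        (Finset.mem_insert_of_mem (Finset.mem_image_of_mem _ (Finset.mem_univ a)))
  obtain ⟨Θ, hΘ1, hΘeq⟩ : ∃ θ : ℝ, 1 < θ ∧ Mmax = (θ - 1) * smin := by
    refine ⟨1 + Mmax / smin, ?_, ?_⟩
    · have : 0 < Mmax / smin := div_pos (by linarith) hsmin_pos
      linarith
    · field_simp
      ring
  have hΘ0 : (0:ℝ) < Θ := by linarith
  -- Afriat numbers
  obtain ⟨φ, lm, hφd, hlmd⟩ :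
      ∃ (φ lm : A → ℝ), (∀ a, φ a = -(Θ ^ (L - r a))) ∧
        (∀ a, lm a = Θ ^ (L - r a) / smin) :=
    ⟨_, _, fun _ => rfl, fun _ => rfl⟩
  have hlm_pos : ∀ a, 0 < lm a := by
    intro a
    rw [hlmd a]
    exact div_pos (pow_pos hΘ0 _) hsmin_pos
  have master : ∀ a b, φ a ≤ φ b + lm b * (dotp (p b) (x a) - m b) := by
    intro a b
    rcases lt_trichotomy (u (x a)) (u (x b)) with hlt | heq | hgt
    · have hra : r a < r b := hrlt a b hlt
      rcases lt_or_ge (dotp (p b) (x a)) (m b) with hs | hs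
      · have h1 : m b - dotp (p b) (x a) ≤ Mmax := by
          have := dotp_nonneg (fun k => (hp b k).le) (hx a)
          linarith [hMm_le b]
        have hexp : L - r b + 1 ≤ L - r a := by
          have := hrL b; omega
        have h2 : Θ ^ (L - r b) * Θ ≤ Θ ^ (L - r a) := by
          calc Θ ^ (L - r b) * Θ = Θ ^ (L - r b + 1) := by ring
          _ ≤ Θ ^ (L - r a) := pow_le_pow_right₀ (by linarith) hexp
        have h3 : lm b * (m b - dotp (p b) (x a)) ≤ Θ ^ (L - r b) * Θ - Θ ^ (L - r b) := by
          have hYpos : (0:ℝ) ≤ Θ ^ (L - r b) / smin := (le_of_lt (by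
            rw [← hlmd b]; exact hlm_pos b))
          calc lm b * (m b - dotp (p b) (x a)) ≤ lm b * Mmax :=
                mul_le_mul_of_nonneg_left h1 (hlm_pos b).le
          _ = Θ ^ (L - r b) / smin * ((Θ - 1) * smin) := by rw [hlmd b, hΘeq]
          _ = Θ ^ (L - r b) * (Θ - 1) := by
                field_simp
          _ = Θ ^ (L - r b) * Θ - Θ ^ (L - r b) := by ring
        rw [hφd a, hφd b]
        nlinarith [h2, h3]
      · have hΘle : Θ ^ (L - r b) ≤ Θ ^ (L - r a) := by
          apply pow_le_pow_right₀ (by linarith)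
          have := hrL b; omega
        have h0 : 0 ≤ lm b * (dotp (p b) (x a) - m b) :=
          mul_nonneg (hlm_pos b).le (by linarith)
        rw [hφd a, hφd b]
        linarith
    · have hs : m b ≤ dotp (p b) (x a) := hG2 a b (le_of_eq heq.symm)
      have h0 : 0 ≤ lm b * (dotp (p b) (x a) - m b) :=
        mul_nonneg (hlm_pos b).le (by linarith)
      have hre : r a = r b := hreq a b heq
      rw [hφd a, hφd b, hre]
      linarith
    · have hs : smin ≤ dotp (p b) (x a) - m b := hsmin_le a b hgt
      have h1 : Θ ^ (L - r b) ≤ lm b * (dotp (p b) (x a) - m b) := by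
        have h := mul_le_mul_of_nonneg_left hs (hlm_pos b).le
        have hc : lm b * smin = Θ ^ (L - r b) := by
          rw [hlmd b, div_mul_cancel₀ _ hsmin_pos.ne']
        linarith
      have h2 : 0 < Θ ^ (L - r a) := pow_pos hΘ0 _
      rw [hφd a, hφd b]
      linarith
  -- the utility
  set g : A → (Fin K → ℝ) → ℝ := fun b y => φ b + lm b * (dotp (p b) y - m b) with hg
  set U : (Fin K → ℝ) → ℝ :=
    fun y => Finset.univ.inf' Finset.univ_nonempty (fun b => g b y) with hU
  have hUle : ∀ y b, U y ≤ g b y := fun y b => Finset.inf'_le _ (Finset.mem_univ b)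
  have hUge : ∀ (y : Fin K → ℝ) (c : ℝ), (∀ b, c ≤ g b y) → c ≤ U y :=
    fun y c h => Finset.le_inf' _ _ (fun b _ => h b)
  have hgaff : ∀ b (y z : Fin K → ℝ) (a c : ℝ), a + c = 1 →
      g b (a • y + c • z) = a * g b y + c * g b z := by
    intro b y z a c hac
    simp only [hg, dotp_lin]
    have hc : c = 1 - a := by linarith
    subst hc
    ring
  refine ⟨U, ?_, ?_, ?_, ?_⟩
  · -- continuity
    apply continuous_finset_inf'
    intro b
    apply Continuous.add continuous_const
    apply Continuous.mul continuous_const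
    apply Continuous.sub ?_ continuous_const
    exact continuous_finset_sum _ (fun k _ => continuous_const.mul (continuous_apply k))
  · -- strict monotonicity
    intro y z hle hlt
    obtain ⟨b0, _, hb0⟩ := Finset.exists_mem_eq_inf' Finset.univ_nonempty (fun b => g b z)
    have h1 : g b0 y < g b0 z := by
      have hd := dotp_lt (p b0) y z (hp b0) hle hlt
      have hl := hlm_pos b0
      simp only [hg]
      nlinarith
    calc U y ≤ g b0 y := hUle y b0
    _ < g b0 z := h1
    _ = U z := hb0.symm
  · -- concavity
    refine ⟨convex_univ, ?_⟩
    intro y _ z _ a c ha hc hac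
    simp only [smul_eq_mul]
    apply hUge
    intro b
    rw [hgaff b y z a c hac]
    have h1 : a * U y ≤ a * g b y := mul_le_mul_of_nonneg_left (hUle y b) ha
    have h2 : c * U z ≤ c * g b z := mul_le_mul_of_nonneg_left (hUle z b) hc
    linarith
  · -- rationalization
    intro a y hy
    have h1 : U y ≤ g a y := hUle y a
    have h2 : g a y ≤ φ a := by
      simp only [hg]
      have hd : dotp (p a) y ≤ m a := hy.2
      nlinarith [hlm_pos a]
    have h3 : φ a ≤ U (x a) := by
      apply hUge
      intro b
      have := master a b
      simp only [hg]
      linarith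
    linarith

end AfriatAux

/-- Proposition 4, (iii) ⇒ (ii): if stable heterogenous prices,
scaled by `λ_i` on `R`, rationalize the data set via a common utility `u`, then the
data set is rationalizable with heterogenous preferences drawn from an `R`-scale
family; in fact the same `u` works, with scales `β_i = 1/λ_i`. -/
theorem stable_prices_implies_rScale {N T K : ℕ}
    (e : Fin N → Fin T → Fin K → ℝ) (pbar : Fin T → Fin K → ℝ)
    (hds : IsDataset e pbar)
    (R : Finset (Fin K)) (hR : R.Nonempty)
    (hpos : ∀ i t, ∀ k ∈ R, 0 < e i t k)
    (lam : Fin N → ℝ) (hlam : ∀ i, 0 < lam i)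
    (p : Fin N → Fin T → Fin K → ℝ)
    (hp : ∀ i t k, p i t k = if k ∈ R then lam i * pbar t k else pbar t k)
    (u : (Fin K → ℝ) → ℝ) (hu : IsUtility u)
    (hrat : ∀ i t, ∀ x ∈ budget (p i t) (∑ k, e i t k),
      u x ≤ u (demandOf (e i t) (p i t))) :
    RScaleRationalize e pbar R ∧
      ∀ i t, ∀ x ∈ budget (pbar t) (∑ k, e i t k),
        u (scaleR R (1 / lam i) x) ≤
          u (scaleR R (1 / lam i) (demandOf (e i t) (pbar t))) := by
  obtain ⟨he0, hm0, hpb⟩ := hds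
  obtain ⟨k0, hk0R⟩ := hR
  have hppos : ∀ i t k, 0 < p i t k := by
    intro i t k
    rw [hp]
    split
    · exact mul_pos (hlam i) (hpb t k)
    · exact hpb t k
  have hscale_budget : ∀ i t (x : Fin K → ℝ), x ∈ budget (pbar t) (∑ k, e i t k) →
      scaleR R (1 / lam i) x ∈ budget (p i t) (∑ k, e i t k) := by
    intro i t x hx
    obtain ⟨hx0, hxb⟩ := hx
    constructor
    · intro k
      simp only [scaleR]
      split
      · exact mul_nonneg (le_of_lt (div_pos one_pos (hlam i))) (hx0 k)
      · exact hx0 k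
    · have heq : dotp (p i t) (scaleR R (1 / lam i) x) = dotp (pbar t) x := by
        apply Finset.sum_congr rfl
        intro k _
        simp only [scaleR, hp]
        have hne : lam i ≠ 0 := (hlam i).ne'
        by_cases hk : k ∈ R
        · simp only [hk, if_true]
          field_simp
        · simp [hk]
      rw [heq]
      exact hxb
  have hscale_demand : ∀ i t,
      scaleR R (1 / lam i) (demandOf (e i t) (pbar t)) = demandOf (e i t) (p i t) := by
    intro i t
    funext k
    simp only [scaleR, demandOf, hp]
    by_cases hk : k ∈ R
    · simp only [hk, if_true]
      rw [div_mul_div_comm, one_mul]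
    · simp [hk]
  have second : ∀ i t, ∀ x ∈ budget (pbar t) (∑ k, e i t k),
      u (scaleR R (1 / lam i) x) ≤ u (scaleR R (1 / lam i) (demandOf (e i t) (pbar t))) := by
    intro i t x hx
    rw [hscale_demand i t]
    exact hrat i t _ (hscale_budget i t x hx)
  refine ⟨?_, second⟩
  have hconvexOrth : Convex ℝ {x : Fin K → ℝ | ∀ k, 0 ≤ x k} := by
    intro x hx y hy a b ha hb hab k
    simp only [Pi.add_apply, Pi.smul_apply, smul_eq_mul]
    exact add_nonneg (mul_nonneg ha (hx k)) (mul_nonneg hb (hy k))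
  rcases isEmpty_or_nonempty (Fin N × Fin T) with hNE | hNE
  · refine ⟨fun _ => 1, fun x => ∑ k, x k, fun _ => one_pos, ⟨?_, ?_⟩, ⟨hconvexOrth, ?_⟩, ?_⟩
    · exact (continuous_finset_sum _ (fun k _ => continuous_apply k)).continuousOn
    · intro x y _ _ hle hlt
      obtain ⟨k, hk⟩ := hlt
      exact Finset.sum_lt_sum (fun k _ => hle k) ⟨k, Finset.mem_univ _, hk⟩
    · intro x _ y _ a b ha hb hab
      simp only [smul_eq_mul, Pi.add_apply, Pi.smul_apply]
      rw [Finset.sum_add_distrib, ← Finset.mul_sum, ← Finset.mul_sum]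
    · intro i t
      exact (hNE.false (i, t)).elim
  · obtain ⟨U, hUc, hUm, hUconc, hUr⟩ := afriat (A := Fin N × Fin T) k0
      (fun a => p a.1 a.2) (fun a => demandOf (e a.1 a.2) (p a.1 a.2))
      (fun a => ∑ k, e a.1 a.2 k)
      (fun a k => hppos a.1 a.2 k)
      (fun a k => div_nonneg (he0 _ _ k) (hppos a.1 a.2 k).le)
      (fun a => by
        simp only [dotp, demandOf]
        apply Finset.sum_congr rfl
        intro k _
        rw [mul_comm, div_mul_cancel₀ _ (hppos a.1 a.2 k).ne'])
      u hu.2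
      (fun a => hrat a.1 a.2)
    refine ⟨fun i => 1 / lam i, U, fun i => div_pos one_pos (hlam i),
      ⟨hUc.continuousOn, fun x y _ _ => hUm x y⟩,
      hUconc.subset (Set.subset_univ _) hconvexOrth, ?_⟩
    intro i t x hx
    rw [hscale_demand i t]
    exact hUr (i, t) _ (hscale_budget i t x hx)
end
end

section
/- Let D = {E^t, p̄^t}_{t∈T} be a discrete cross-sectional data set and R ⊆ K a nonempty subset such that every e ∈ E^t (for every t) has e_k > 0 for all k ∈ R, and let W: ℝ^N_{++} → ℝ_{++} be a price aggregator that is homogeneous of degree 1. Then D is RUM-rationalizable if and only if there exist sorting functions {σ^t}_{t∈T} and real numbers λ_1,…,λ_N > 0 such that the heterogenous prices P = {p^{i,t}} defined by p^{i,t}_k = λ_i p̄^t_k for k ∈ R and p^{i,t}_k = p̄^t_k for k ∉ R satisfy W((p^{i,t}_k)_{i∈N}) = p̄^t_k for every (k,t), and P rationalizes E({σ^t}) = {(σ^t(i))_{i∈N}, p̄^t}_{t∈T}. -/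
open Filter Set MeasureTheory

noncomputable section

/-- A sorting function: a bijection from `{1,…,N}` onto the set `Et` of allocations. -/
def IsSorting {N K : ℕ} (Et : Finset (Fin K → ℝ)) (σ : Fin N → (Fin K → ℝ)) : Prop :=
  Function.Injective σ ∧ (∀ i, σ i ∈ Et) ∧ ∀ e ∈ Et, ∃ i, σ i = e

-- aux
lemma isUtility_sum {K : ℕ} : IsUtility (fun x : Fin K → ℝ => ∑ k, x k) := by
  constructor
  · exact (continuous_finset_sum _ fun k _ => continuous_apply k).continuousOn
  · rintro x y _ _ hle ⟨k, hk⟩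
    exact Finset.sum_lt_sum (fun i _ => hle i) ⟨k, Finset.mem_univ k, hk⟩

lemma inf'_lt_inf' {ι : Type*} (s : Finset ι) (hs : s.Nonempty) (f g : ι → ℝ)
    (h : ∀ i ∈ s, f i < g i) : (s.inf' hs f) < s.inf' hs g := by
  obtain ⟨i, hi, hEq⟩ := Finset.exists_mem_eq_inf' hs g
  exact hEq ▸ lt_of_le_of_lt (Finset.inf'_le f hi) (h i hi)

lemma contOn_max {X : Type*} [TopologicalSpace X] {S : Set X} {f g : X → ℝ}
    (hf : ContinuousOn f S) (hg : ContinuousOn g S) :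
    ContinuousOn (fun x => max (f x) (g x)) S := by
  exact hf.sup hg

/-- Core construction for the forward direction. -/
lemma forward_core {N T K : ℕ} (hT : 0 < T)
    (pbar : Fin T → Fin K → ℝ) (m : Fin T → ℝ)
    (hm : ∀ t, 0 < m t) (hpbar : ∀ t k, 0 < pbar t k)
    (R : Finset (Fin K)) (hR : R.Nonempty)
    (e : Fin N → Fin T → Fin K → ℝ)
    (hnn : ∀ i t k, 0 ≤ e i t k)
    (hpos : ∀ i t, ∀ k ∈ R, 0 < e i t k)
    (hsume : ∀ i t, ∑ k, e i t k = m t)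
    (u : Fin N → (Fin K → ℝ) → ℝ) (hu : ∀ i, IsUtility (u i))
    (hrat : ∀ i t, ∀ x ∈ budget (pbar t) (m t), u i x ≤ u i (demandOf (e i t) (pbar t)))
    (W : (Fin N → ℝ) → ℝ) (hW : IsAggregator W)
    (hhom : ∀ c : ℝ, 0 < c → ∀ q : Fin N → ℝ, (∀ i, 0 < q i) →
      W (fun i => c * q i) = c * W q) (hN : 0 < N) :
    ∃ lam : Fin N → ℝ, (∀ i, 0 < lam i) ∧ W lam = 1 ∧
      PricesRationalize e (fun i t k => if k ∈ R then lam i * pbar t k else pbar t k) := by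
  classical
  -- implied bundles at common prices
  set x : Fin N → Fin T → Fin K → ℝ := fun j t => demandOf (e j t) (pbar t) with hxdef
  have hxnn : ∀ j t k, 0 ≤ x j t k := fun j t k => div_nonneg (hnn j t k) (hpbar t k).le
  have hxpos : ∀ j t, ∀ k ∈ R, 0 < x j t k := fun j t k hk => div_pos (hpos j t k hk) (hpbar t k)
  -- constants
  set A : Fin T → Fin N → Fin T → ℝ := fun s j t => ∑ k ∈ R, pbar s k * x j t k with hAdef
  have hApos : ∀ s j t, 0 < A s j t := fun s j t =>
    Finset.sum_pos (fun k hk => mul_pos (hpbar s k) (hxpos j t k hk)) hR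
  have hSTne : (Finset.univ : Finset (Fin T × Fin N × Fin T)).Nonempty :=
    ⟨⟨⟨0, hT⟩, ⟨0, hN⟩, ⟨0, hT⟩⟩, Finset.mem_univ _⟩
  set c0 : ℝ := Finset.univ.inf' hSTne (fun q : Fin T × Fin N × Fin T => A q.1 q.2.1 q.2.2) with hc0def
  have hc0 : 0 < c0 := by
    rw [hc0def, Finset.lt_inf'_iff]
    exact fun q _ => hApos _ _ _
  have hc0le : ∀ s j t, c0 ≤ A s j t := fun s j t =>
    Finset.inf'_le _ (Finset.mem_univ (⟨s, j, t⟩ : Fin T × Fin N × Fin T))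
  set mbar : ℝ := ∑ t, m t with hmbardef
  have hmle : ∀ s, m s ≤ mbar := fun s =>
    Finset.single_le_sum (fun t _ => (hm t).le) (Finset.mem_univ s)
  have hmbar0 : 0 < mbar := lt_of_lt_of_le (hm ⟨0, hT⟩) (hmle ⟨0, hT⟩)
  set Λ : ℝ := (2 + mbar) / c0 + 2 with hΛdef
  have hΛ2 : 2 ≤ Λ := by
    have h : 0 < (2 + mbar) / c0 := div_pos (by linarith) hc0
    rw [hΛdef]; linarith
  have hΛ1 : 1 ≤ Λ := by linarith
  have hΛ0 : 0 < Λ := by linarith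
  have hΛc0 : Λ * c0 = 2 + mbar + 2 * c0 := by
    rw [hΛdef, add_mul, div_mul_cancel₀ _ (ne_of_gt hc0)]
  -- the lambdas
  set lam0 : Fin N → ℝ := fun j => Λ ^ (j : ℕ) with hlam0def
  have hlam0 : ∀ j, 0 < lam0 j := fun j => pow_pos hΛ0 _
  set wW : ℝ := W lam0 with hwWdef
  have hwW : 0 < wW := hW.1 _ hlam0
  set lam : Fin N → ℝ := fun j => lam0 j / wW with hlamdef
  have hlam : ∀ j, 0 < lam j := fun j => div_pos (hlam0 j) hwW
  have hWlam : W lam = 1 := by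
    have h1 : lam = fun i => wW⁻¹ * lam0 i := by
      funext i; rw [hlamdef]; ring
    rw [h1, hhom wW⁻¹ (inv_pos.2 hwW) lam0 hlam0, inv_mul_cancel₀ (ne_of_gt hwW)]
  have hlamratio : ∀ j j' : Fin N, (j : ℕ) < (j' : ℕ) → Λ * lam j ≤ lam j' := by
    intro j j' hjj'
    rw [hlamdef]
    simp only [mul_div_assoc']
    apply div_le_div_of_nonneg_right ?_ hwW.le
    calc Λ * lam0 j = Λ ^ ((j : ℕ) + 1) := by rw [hlam0def, pow_succ]; ring
      _ ≤ Λ ^ (j' : ℕ) := pow_le_pow_right₀ hΛ1 hjj'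
  clear_value c0 mbar wW Λ lam0 lam
  -- prices and transformed bundles
  set p : Fin N → Fin T → Fin K → ℝ :=
    fun j t k => if k ∈ R then lam j * pbar t k else pbar t k with hpdef
  have hp : ∀ j t k, 0 < p j t k := by
    intro j t k; rw [hpdef]; dsimp only
    split
    · exact mul_pos (hlam j) (hpbar t k)
    · exact hpbar t k
  set y : Fin N → Fin T → Fin K → ℝ := fun j t => demandOf (e j t) (p j t) with hydef
  have hynn : ∀ j t k, 0 ≤ y j t k := fun j t k => div_nonneg (hnn j t k) (hp j t k).le
  set ψ : Fin N → (Fin K → ℝ) → (Fin K → ℝ) :=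
    fun j z k => if k ∈ R then lam j * z k else z k with hψdef
  have hψnn : ∀ j z, (∀ k, 0 ≤ z k) → ∀ k, 0 ≤ ψ j z k := by
    intro j z hz k; rw [hψdef]; dsimp only
    split
    · exact mul_nonneg (hlam j).le (hz k)
    · exact hz k
  have hdotψ : ∀ j s z, dotp (pbar s) (ψ j z) = dotp (p j s) z := by
    intro j s z
    apply Finset.sum_congr rfl
    intro k _
    rw [hψdef, hpdef]; dsimp only
    split <;> ring
  have hψy : ∀ j t, ψ j (y j t) = x j t := by
    intro j t; funext k
    rw [hψdef, hydef, hxdef]; dsimp only [demandOf]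
    split
    · rw [hpdef]; dsimp only
      rw [if_pos ‹k ∈ R›]
      rw [mul_comm (lam j) (pbar t k), ← div_div,
        mul_comm (lam j) (e j t k / pbar t k / lam j),
        div_mul_cancel₀ _ (ne_of_gt (hlam j))]
    · rw [hpdef]; dsimp only
      rw [if_neg ‹k ∉ R›]
  have hdoty : ∀ j t, dotp (p j t) (y j t) = m t := by
    intro j t
    rw [← hsume j t]
    apply Finset.sum_congr rfl
    intro k _
    rw [hydef]; dsimp only [demandOf]
    rw [mul_comm, div_mul_cancel₀ _ (ne_of_gt (hp j t k))]
  have hψbudget : ∀ j s z, z ∈ budget (p j s) (m s) → ψ j z ∈ budget (pbar s) (m s) := by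
    intro j s z hz
    exact ⟨hψnn j z hz.1, by rw [hdotψ]; exact hz.2⟩
  -- cross bound
  have hcross : ∀ (j j' : Fin N), (j : ℕ) < (j' : ℕ) → ∀ s' t,
      Λ * c0 ≤ dotp (p j' s') (y j t) := by
    intro j j' hjj' s' t
    have hterm : ∀ k ∈ R, Λ * (pbar s' k * x j t k) ≤ p j' s' k * y j t k := by
      intro k hk
      have hyx : lam j * y j t k = x j t k := by
        have := congrFun (hψy j t) k
        rw [hψdef] at this; dsimp only at this
        rwa [if_pos hk] at this
      have h1 : Λ * (pbar s' k * x j t k) = (Λ * lam j) * (pbar s' k * y j t k) := by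
        rw [← hyx]; ring
      rw [h1]
      have h2 : p j' s' k = lam j' * pbar s' k := by rw [hpdef]; dsimp only; rw [if_pos hk]
      rw [h2]
      have h3 := mul_le_mul_of_nonneg_right (hlamratio j j' hjj')
        (mul_nonneg (hpbar s' k).le (hynn j t k))
      nlinarith [h3]
    calc Λ * c0 ≤ Λ * A s' j t := mul_le_mul_of_nonneg_left (hc0le s' j t) hΛ0.le
      _ = ∑ k ∈ R, Λ * (pbar s' k * x j t k) := by rw [hAdef]; dsimp only; rw [Finset.mul_sum]
      _ ≤ ∑ k ∈ R, p j' s' k * y j t k := Finset.sum_le_sum hterm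
      _ ≤ ∑ k, p j' s' k * y j t k := Finset.sum_le_sum_of_subset_of_nonneg
          (Finset.subset_univ R) (fun k _ _ => mul_nonneg (hp j' s' k).le (hynn j t k))
  -- utility ingredients
  set sq : ℝ → ℝ := fun r => Real.arctan r / (2 * Real.pi) with hsqdef
  have hpi : (0:ℝ) < 2 * Real.pi := by positivity
  have hsqlt : ∀ r, sq r < 4⁻¹ := by
    intro r
    rw [hsqdef]; dsimp only
    rw [div_lt_iff₀ hpi]
    have := Real.arctan_lt_pi_div_two r
    linarith
  have hsqgt : ∀ r, -4⁻¹ < sq r := by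
    intro r
    rw [hsqdef]; dsimp only
    rw [lt_div_iff₀ hpi]
    have := Real.neg_pi_div_two_lt_arctan r
    linarith
  have hsqmono : StrictMono sq := fun a b hab =>
    div_lt_div_of_pos_right (Real.arctan_strictMono hab) hpi
  have hsqcont : Continuous sq := Real.continuous_arctan.div_const _
  set P : Fin N → ℝ := fun j => (2⁻¹ : ℝ) ^ (j : ℕ) with hPdef
  have hP : ∀ j, 0 < P j := fun j => pow_pos (by norm_num) _
  have hPle1 : ∀ j, P j ≤ 1 := fun j => pow_le_one₀ (by norm_num) (by norm_num)
  have hPhalf : ∀ j j' : Fin N, (j : ℕ) < (j' : ℕ) → P j' ≤ 2⁻¹ * P j := by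
    intro j j' h
    calc P j' ≤ (2⁻¹ : ℝ) ^ ((j : ℕ) + 1) :=
          pow_le_pow_of_le_one (by norm_num) (by norm_num) h
      _ = 2⁻¹ * P j := by rw [hPdef, pow_succ]; ring
  set gg : Fin N → ℝ → ℝ := fun j r => P j * (1 + sq r) with hggdef
  have hgglt : ∀ j r, gg j r < 5/4 * P j := by
    intro j r
    rw [hggdef]; dsimp only
    have := hsqlt r
    nlinarith [hP j]
  have hgggt : ∀ j r, 3/4 * P j < gg j r := by
    intro j r
    rw [hggdef]; dsimp only
    have := hsqgt r
    nlinarith [hP j]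
  have hggmono : ∀ j, Monotone (gg j) := by
    intro j a b hab
    rw [hggdef]; dsimp only
    exact mul_le_mul_of_nonneg_left (by linarith [hsqmono.monotone hab]) (hP j).le
  have hggstrict : ∀ j, StrictMono (gg j) := by
    intro j a b hab
    rw [hggdef]; dsimp only
    exact mul_lt_mul_of_pos_left (by linarith [hsqmono hab]) (hP j)
  -- pieces of the utility
  set v : Fin N → (Fin K → ℝ) → ℝ := fun j z => u j (ψ j z) with hvdef
  have hTne : (Finset.univ : Finset (Fin T)).Nonempty := ⟨⟨0, hT⟩, Finset.mem_univ _⟩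
  have hNne : (Finset.univ : Finset (Fin N)).Nonempty := ⟨⟨0, hN⟩, Finset.mem_univ _⟩
  set hf : Fin N → (Fin K → ℝ) → ℝ :=
    fun j z => 3/4 * P j + Finset.univ.inf' hTne (fun s => dotp (p j s) z - m s) with hhfdef
  set F : Fin N → (Fin K → ℝ) → ℝ := fun j z => max (gg j (v j z)) (hf j z) with hFdef
  set U : (Fin K → ℝ) → ℝ := fun z => Finset.univ.inf' hNne (fun j => F j z) with hUdef
  -- basic bounds
  have hfle : ∀ j z s0, dotp (p j s0) z ≤ m s0 → hf j z ≤ 3/4 * P j := by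
    intro j z s0 h0
    rw [hhfdef]; dsimp only
    have : Finset.univ.inf' hTne (fun s => dotp (p j s) z - m s) ≤ dotp (p j s0) z - m s0 :=
      Finset.inf'_le _ (Finset.mem_univ s0)
    linarith
  have hvle : ∀ j s z, z ∈ budget (p j s) (m s) → v j z ≤ v j (y j s) := by
    intro j s z hz
    rw [hvdef]; dsimp only
    rw [hψy j s]
    exact hrat j s (ψ j z) (hψbudget j s z hz)
  have hFratio : ∀ j s, ∀ z ∈ budget (p j s) (m s), F j z ≤ gg j (v j (y j s)) := by
    intro j s z hz
    rw [hFdef]; dsimp only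
    apply max_le
    · exact hggmono j (hvle j s z hz)
    · exact le_trans (hfle j z s hz.2) (hgggt j _).le
  have hylt : ∀ j s, F j (y j s) < 5/4 * P j := by
    intro j s
    rw [hFdef]; dsimp only
    apply max_lt (hgglt j _)
    calc hf j (y j s) ≤ 3/4 * P j := hfle j (y j s) s (le_of_eq (hdoty j s))
      _ < 5/4 * P j := by linarith [hP j]
  have hyge : ∀ j s, gg j (v j (y j s)) ≤ F j (y j s) := fun j s => le_max_left _ _
  -- cross comparisons
  have hcruc : ∀ j j' : Fin N, ∀ s, j ≠ j' → F j (y j s) ≤ F j' (y j s) := by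
    intro j j' s hne'
    rcases lt_or_gt_of_ne (fun h : (j : ℕ) = (j' : ℕ) => hne' (Fin.ext h)) with hlt | hgt
    · -- j < j' : use the h-piece of F j', unaffordability
      have hterm : ∀ s', 2 ≤ dotp (p j' s') (y j s) - m s' := by
        intro s'
        have h1 := hcross j j' hlt s' s
        have h2 := hmle s'
        have := hc0
        rw [hΛc0] at h1
        linarith
      have h3 : (2:ℝ) ≤ Finset.univ.inf' hTne (fun s' => dotp (p j' s') (y j s) - m s') :=
        Finset.le_inf' _ _ (fun s' _ => hterm s')
      have h4 : (2:ℝ) ≤ hf j' (y j s) := by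
        rw [hhfdef]; dsimp only
        linarith [hP j', h3]
      have h5 : F j (y j s) < 2 := by
        linarith [hylt j s, hPle1 j]
      calc F j (y j s) ≤ 2 := h5.le
        _ ≤ hf j' (y j s) := h4
        _ ≤ F j' (y j s) := le_max_right _ _
    · -- j' < j : use band separation
      have h1 : F j (y j s) < 5/4 * P j := hylt j s
      have h2 : 3/4 * P j' < gg j' (v j' (y j s)) := hgggt j' _
      have h3 : P j ≤ 2⁻¹ * P j' := hPhalf j' j hgt
      have h4 : gg j' (v j' (y j s)) ≤ F j' (y j s) := le_max_left _ _
      linarith [hP j']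
  -- U is the desired utility
  have hUy : ∀ j s, gg j (v j (y j s)) ≤ U (y j s) := by
    intro j s
    rw [hUdef]; dsimp only
    apply Finset.le_inf'
    intro j' _
    by_cases h : j = j'
    · subst h; exact hyge j s
    · exact le_trans (le_trans (hyge j s) (hcruc j j' s h)) (le_refl _)
  have hUrat : ∀ j s, ∀ z ∈ budget (p j s) (m s), U z ≤ U (y j s) := by
    intro j s z hz
    calc U z ≤ F j z := Finset.inf'_le _ (Finset.mem_univ j)
      _ ≤ gg j (v j (y j s)) := hFratio j s z hz
      _ ≤ U (y j s) := hUy j s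
  -- strict monotonicity and continuity
  have hψcont : ∀ j, Continuous (ψ j) := by
    intro j
    rw [hψdef]
    apply continuous_pi
    intro k
    dsimp only
    split
    · exact continuous_const.mul (continuous_apply k)
    · exact continuous_apply k
  have hvcont : ∀ j, ContinuousOn (v j) {z : Fin K → ℝ | ∀ k, 0 ≤ z k} := by
    intro j
    rw [hvdef]
    exact ((hu j).1).comp (hψcont j).continuousOn
      (fun z hz => hψnn j z hz)
  have hFcont : ∀ j, ContinuousOn (F j) {z : Fin K → ℝ | ∀ k, 0 ≤ z k} := by
    intro j
    rw [hFdef]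
    apply contOn_max
    · exact ((continuous_const.mul (continuous_const.add hsqcont)).comp_continuousOn (hvcont j))
    · rw [hhfdef]
      apply ContinuousOn.add continuousOn_const
      apply ContinuousOn.finset_inf'_apply hTne
      intro s _
      apply Continuous.continuousOn
      exact (continuous_finset_sum _ fun k _ => continuous_const.mul (continuous_apply k)).sub
        continuous_const
  have hFstrict : ∀ j (z w : Fin K → ℝ), (∀ k, 0 ≤ z k) → (∀ k, 0 ≤ w k) →
      (∀ k, z k ≤ w k) → (∃ k, z k < w k) → F j z < F j w := by
    intro j z w hz hw hle ⟨k0, hk0⟩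
    rw [hFdef]; dsimp only
    apply max_lt_max
    · apply hggstrict j
      rw [hvdef]; dsimp only
      apply (hu j).2 (ψ j z) (ψ j w) (hψnn j z hz) (hψnn j w hw)
      · intro k
        rw [hψdef]; dsimp only
        split
        · exact mul_le_mul_of_nonneg_left (hle k) (hlam j).le
        · exact hle k
      · refine ⟨k0, ?_⟩
        rw [hψdef]; dsimp only
        split
        · exact mul_lt_mul_of_pos_left hk0 (hlam j)
        · exact hk0
    · rw [hhfdef]; dsimp only
      apply add_lt_add_of_le_of_lt le_rfl
      apply inf'_lt_inf'
      intro s _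
      apply sub_lt_sub_right
      exact Finset.sum_lt_sum (fun k _ => mul_le_mul_of_nonneg_left (hle k) (hp j s k).le)
        ⟨k0, Finset.mem_univ k0, mul_lt_mul_of_pos_left hk0 (hp j s k0)⟩
  have hUutil : IsUtility U := by
    constructor
    · rw [hUdef]
      exact ContinuousOn.finset_inf'_apply hNne (fun j _ => hFcont j)
    · intro z w hz hw hle hex
      rw [hUdef]; dsimp only
      exact inf'_lt_inf' _ hNne _ _ (fun j _ => hFstrict j z w hz hw hle hex)
  refine ⟨lam, hlam, hWlam, U, hUutil, ?_⟩
  intro i t z hz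
  rw [hsume i t] at hz
  exact hUrat i t z hz


/-- Proposition 5: a discrete cross-sectional data set is
RUM-rationalizable iff it is RPM-rationalizable by a stable price distribution,
consistent in expectation with respect to a linearly homogeneous aggregator `W`,
with price heterogeneity only in the goods in `R`. -/
theorem rum_iff_rpm {N T K : ℕ}
    (Et : Fin T → Finset (Fin K → ℝ)) (pbar : Fin T → Fin K → ℝ)
    (m : Fin T → ℝ)
    (hcard : ∀ t, (Et t).card = N)
    (hnn : ∀ t, ∀ e ∈ Et t, ∀ k, 0 ≤ e k)
    (hm : ∀ t, 0 < m t)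
    (hsum : ∀ t, ∀ e ∈ Et t, ∑ k, e k = m t)
    (hpbar : ∀ t k, 0 < pbar t k)
    (R : Finset (Fin K)) (hR : R.Nonempty)
    (hpos : ∀ t, ∀ e ∈ Et t, ∀ k ∈ R, 0 < e k)
    (W : (Fin N → ℝ) → ℝ) (hW : IsAggregator W)
    (hhom : ∀ c : ℝ, 0 < c → ∀ q : Fin N → ℝ, (∀ i, 0 < q i) →
      W (fun i => c * q i) = c * W q) :
    (∃ σ : Fin T → Fin N → (Fin K → ℝ), (∀ t, IsSorting (Et t) (σ t)) ∧
        HetPrefRationalize (fun i t => σ t i) pbar) ↔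
    (∃ (σ : Fin T → Fin N → (Fin K → ℝ)) (lam : Fin N → ℝ),
        (∀ t, IsSorting (Et t) (σ t)) ∧ (∀ i, 0 < lam i) ∧
        (∀ t k, W (fun i => if k ∈ R then lam i * pbar t k else pbar t k) = pbar t k) ∧
        PricesRationalize (fun i t => σ t i)
          (fun i t k => if k ∈ R then lam i * pbar t k else pbar t k)) := by
  classical
  constructor
  · rintro ⟨σ, hσ, u, hu, hrat⟩
    by_cases hN0 : N = 0
    · subst hN0
      refine ⟨σ, fun _ => 1, hσ, fun i => i.elim0, ?_, ?_⟩
      · intro t k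
        have h1 : (fun i : Fin 0 => if k ∈ R then (1:ℝ) * pbar t k else pbar t k)
            = fun _ => pbar t k := funext fun i => i.elim0
        rw [h1]
        exact hW.2.2.2 _ (hpbar t k)
      · exact ⟨fun z => ∑ k, z k, isUtility_sum, fun i => i.elim0⟩
    · by_cases hT0 : T = 0
      · subst hT0
        exact ⟨σ, fun _ => 1, hσ, fun _ => one_pos, fun t => t.elim0,
          ⟨fun z => ∑ k, z k, isUtility_sum, fun i t => t.elim0⟩⟩
      · have hT : 0 < T := Nat.pos_of_ne_zero hT0
        have hN : 0 < N := Nat.pos_of_ne_zero hN0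
        obtain ⟨lam, hlam, hWlam, hPR⟩ := forward_core hT pbar m hm hpbar R hR
          (fun i t => σ t i)
          (fun i t k => hnn t _ ((hσ t).2.1 i) k)
          (fun i t k hk => hpos t _ ((hσ t).2.1 i) k hk)
          (fun i t => hsum t _ ((hσ t).2.1 i))
          u hu
          (fun i t z hz => hrat i t z (by
            rw [show (∑ k, σ t i k) = m t from hsum t _ ((hσ t).2.1 i)]
            exact hz))
          W hW hhom hN
        refine ⟨σ, lam, hσ, hlam, ?_, hPR⟩
        intro t k
        by_cases hk : k ∈ R
        · simp only [if_pos hk]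
          have h1 : (fun i => lam i * pbar t k) = fun i => pbar t k * lam i :=
            funext fun i => mul_comm _ _
          rw [h1, hhom (pbar t k) (hpbar t k) lam hlam, hWlam, mul_one]
        · simp only [if_neg hk]
          exact hW.2.2.2 _ (hpbar t k)
  · rintro ⟨σ, lam, hσ, hlam, hWc, u, hU, hrat⟩
    refine ⟨σ, hσ, fun i z => u (fun k => if k ∈ R then z k / lam i else z k), ?_, ?_⟩
    · intro i
      have hφcont : Continuous (fun (z : Fin K → ℝ) k => if k ∈ R then z k / lam i else z k) := by
        apply continuous_pi
        intro k
        split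
        · exact (continuous_apply k).div_const _
        · exact continuous_apply k
      have hφnn : ∀ z : Fin K → ℝ, (∀ k, 0 ≤ z k) →
          ∀ k, 0 ≤ (fun k => if k ∈ R then z k / lam i else z k) k := by
        intro z hz k
        dsimp only
        split
        · exact div_nonneg (hz k) (hlam i).le
        · exact hz k
      constructor
      · exact hU.1.comp hφcont.continuousOn (fun z hz => hφnn z hz)
      · intro z w hz hw hle ⟨k0, hk0⟩
        apply hU.2 _ _ (hφnn z hz) (hφnn w hw)
        · intro k
          split
          · exact div_le_div_of_nonneg_right (hle k) (hlam i).le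
          · exact hle k
        · refine ⟨k0, ?_⟩
          split
          · exact div_lt_div_of_pos_right hk0 (hlam i)
          · exact hk0
    · intro i t z hz
      have h1 : (fun k => if k ∈ R then demandOf (σ t i) (pbar t) k / lam i
            else demandOf (σ t i) (pbar t) k)
          = demandOf (σ t i) (fun k => if k ∈ R then lam i * pbar t k else pbar t k) := by
        funext k
        dsimp only [demandOf]
        split
        · rw [div_div, mul_comm (pbar t k) (lam i)]
        · rfl
      have h2 : (fun k => if k ∈ R then z k / lam i else z k)
          ∈ budget (fun k => if k ∈ R then lam i * pbar t k else pbar t k) (∑ k, σ t i k) := by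
        constructor
        · intro k
          dsimp only
          split
          · exact div_nonneg (hz.1 k) (hlam i).le
          · exact hz.1 k
        · have h3 : dotp (fun k => if k ∈ R then lam i * pbar t k else pbar t k)
              (fun k => if k ∈ R then z k / lam i else z k) = dotp (pbar t) z := by
            apply Finset.sum_congr rfl
            intro k _
            dsimp only
            split
            · have hne0 : lam i ≠ 0 := ne_of_gt (hlam i)
              field_simp
            · rfl
          rw [h3]
          exact hz.2
      have h4 := hrat i t _ h2
      dsimp only at h4 ⊢
      rw [h1]
      exact h4

end
end

section
/- Suppose each observation t ∈ {1,…,T} consists of prices p^t_{−1} ∈ ℝ^{K−1}_{++} and demands x^t_{−1} ∈ ℝ^{K−1}_+ for goods 2,…,K, together with an expenditure e^t_1 > 0 on good 1. Then there exist p̂^t_1 > 0 and x̂^t_1 > 0 with p̂^t_1 · x̂^t_1 = e^t_1 for every t, such that the data set {(x^t, p^t)}_{t∈T}, where x^t = (x̂^t_1, x^t_{−1}) and p^t = (p̂^t_1, p^t_{−1}), satisfies GARP. -/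
open Filter Set MeasureTheory

noncomputable section

/-- `x^a` is directly revealed preferred to `x^b`. -/
def RevD {K : ℕ} {A : Type*} (x p : A → Fin K → ℝ) (a b : A) : Prop :=
  dotp (p a) (x b) ≤ dotp (p a) (x a)

/-- `x^a` is directly revealed strictly preferred to `x^b`. -/
def RevSD {K : ℕ} {A : Type*} (x p : A → Fin K → ℝ) (a b : A) : Prop :=
  dotp (p a) (x b) < dotp (p a) (x a)

/-- The generalized axiom of revealed preference. -/
def GARP {K : ℕ} {A : Type*} (x p : A → Fin K → ℝ) : Prop :=
  ∀ a b, Relation.ReflTransGen (RevD x p) a b → ¬ RevSD x p b a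

/-- Varian-type result: if each observation consists of prices and
demands for goods `2,…,K` together with a strictly positive expenditure on good 1,
then there are hypothetical prices and demands for good 1, multiplying to the observed
expenditure, such that the completed data set satisfies GARP. -/
theorem varian_missing_good {T K : ℕ} (hK : 0 < K)
    (p x : Fin T → Fin K → ℝ) (e1 : Fin T → ℝ)
    (hp : ∀ t (k : Fin K), k ≠ ⟨0, hK⟩ → 0 < p t k)
    (hx : ∀ t (k : Fin K), k ≠ ⟨0, hK⟩ → 0 ≤ x t k)
    (he1 : ∀ t, 0 < e1 t) :
    ∃ ph xh : Fin T → ℝ,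
      (∀ t, 0 < ph t) ∧ (∀ t, 0 < xh t) ∧ (∀ t, ph t * xh t = e1 t) ∧
      GARP (fun t => Function.update (x t) ⟨0, hK⟩ (xh t))
        (fun t => Function.update (p t) ⟨0, hK⟩ (ph t)) := by
 classical
  set i0 : Fin K := ⟨0, hK⟩ with hi0
  set S : Fin T → Fin T → ℝ := fun a b => ∑ k ∈ Finset.univ.erase i0, p a k * x b k
    with hS
  set C : ℝ := ∑ a : Fin T, ∑ b : Fin T, |(S a a - S a b) / e1 a| with hC
  have hC0 : 0 ≤ C := Finset.sum_nonneg fun a _ =>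
    Finset.sum_nonneg fun b _ => abs_nonneg _
  have hCle : ∀ a b : Fin T, (S a a - S a b) / e1 a ≤ C := by
    intro a b
    have h1 : (S a a - S a b) / e1 a ≤ ∑ c : Fin T, |(S a a - S a c) / e1 a| :=
      le_trans (le_abs_self _)
        (Finset.single_le_sum (f := fun c => |(S a a - S a c) / e1 a|)
          (fun c _ => abs_nonneg _) (Finset.mem_univ b))
    have h2 : (∑ c : Fin T, |(S a a - S a c) / e1 a|) ≤ C :=
      Finset.single_le_sum (f := fun a => ∑ c : Fin T, |(S a a - S a c) / e1 a|)
        (fun a _ => Finset.sum_nonneg fun c _ => abs_nonneg _) (Finset.mem_univ a)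
    exact le_trans h1 h2
  set R : ℝ := 2 + C with hR
  have hR1 : 1 < R := by linarith
  have hR0 : 0 < R := by linarith
  set xh : Fin T → ℝ := fun t => R ^ ((t : ℕ) + 1) with hxh
  have hxh0 : ∀ t, 0 < xh t := fun t => pow_pos hR0 _
  set ph : Fin T → ℝ := fun t => e1 t / xh t with hph
  have hph0 : ∀ t, 0 < ph t := fun t => div_pos (he1 t) (hxh0 t)
  have hmul : ∀ t, ph t * xh t = e1 t := fun t =>
    div_mul_cancel₀ _ (ne_of_gt (hxh0 t))
  refine ⟨ph, xh, hph0, hxh0, hmul, ?_⟩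
  -- compute the completed dot products
  have hdot : ∀ a b : Fin T,
      dotp (Function.update (p a) i0 (ph a)) (Function.update (x b) i0 (xh b))
        = ph a * xh b + S a b := by
    intro a b
    have hco : ∀ k ∈ Finset.univ.erase i0,
        Function.update (p a) i0 (ph a) k * Function.update (x b) i0 (xh b) k
          = p a k * x b k := by
      intro k hk
      rw [Function.update_of_ne (Finset.ne_of_mem_erase hk),
        Function.update_of_ne (Finset.ne_of_mem_erase hk)]
    rw [dotp, ← Finset.add_sum_erase _ _ (Finset.mem_univ i0),
      Finset.sum_congr rfl hco]
    simp [hS]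
  -- the key monotonicity lemma
  have key : ∀ a b : Fin T,
      RevD (fun t => Function.update (x t) i0 (xh t))
        (fun t => Function.update (p t) i0 (ph t)) a b → xh b ≤ xh a := by
    intro a b hrev
    by_contra hlt
    push_neg at hlt
    have hab : (a : ℕ) + 1 < (b : ℕ) + 1 := (pow_lt_pow_iff_right₀ hR1).mp hlt
    have hRxa : R * xh a ≤ xh b := by
      have h : R ^ ((a : ℕ) + 2) ≤ R ^ ((b : ℕ) + 1) :=
        pow_le_pow_right₀ (le_of_lt hR1) (by omega)
      calc R * xh a = R ^ ((a : ℕ) + 2) := by rw [hxh]; ring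
        _ ≤ xh b := h
    unfold RevD at hrev
    rw [hdot, hdot, hmul] at hrev
    have h1 : e1 a * R ≤ ph a * xh b := by
      have h : ph a * (R * xh a) ≤ ph a * xh b :=
        mul_le_mul_of_nonneg_left hRxa (le_of_lt (hph0 a))
      calc e1 a * R = ph a * (R * xh a) := by
            rw [hph]; have hxa := (hxh0 a).ne'; field_simp
        _ ≤ ph a * xh b := h
    have h2 : S a a - S a b ≤ e1 a * C := by
      have h := mul_le_mul_of_nonneg_left (hCle a b) (le_of_lt (he1 a))
      rwa [mul_div_cancel₀ _ (ne_of_gt (he1 a))] at h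
    nlinarith [he1 a]
  -- chains preserve the inequality
  have chain : ∀ a b : Fin T,
      Relation.ReflTransGen (RevD (fun t => Function.update (x t) i0 (xh t))
        (fun t => Function.update (p t) i0 (ph t))) a b → xh b ≤ xh a := by
    intro a b h
    induction h with
    | refl => exact le_refl _
    | tail _ h2 ih => exact le_trans (key _ _ h2) ih
  intro a b hab hsd
  have h1 : xh b ≤ xh a := chain a b hab
  have h2 : xh a ≤ xh b := key b a (le_of_lt hsd)
  have heq : xh a = xh b := le_antisymm h2 h1
  have hne : a = b := by
    have g1 : ¬ ((a : ℕ) + 1 < (b : ℕ) + 1) := by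
      intro h
      exact absurd ((pow_lt_pow_iff_right₀ hR1).mpr h)
        (by rw [show R ^ ((a : ℕ) + 1) = xh a from rfl,
          show R ^ ((b : ℕ) + 1) = xh b from rfl, heq]; exact lt_irrefl _)
    have g2 : ¬ ((b : ℕ) + 1 < (a : ℕ) + 1) := by
      intro h
      exact absurd ((pow_lt_pow_iff_right₀ hR1).mpr h)
        (by rw [show R ^ ((a : ℕ) + 1) = xh a from rfl,
          show R ^ ((b : ℕ) + 1) = xh b from rfl, heq]; exact lt_irrefl _)
    have : (a : ℕ) = (b : ℕ) := by omega
    exact Fin.ext this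
  subst hne
  simp only [RevSD] at hsd
  exact lt_irrefl _ hsd
end
end

section
/- Let f: ℝ_{++} → ℝ_{++} be a function such that either f(r) → ∞ as r → 0+ or f(r) → ∞ as r → ∞, and suppose f is continuous (so that infima over compact ratio sets are attained). Then the behavioral expenditure function φ: ℝ^2_{++} → ℝ_+ defined by φ(e, e') = e · f(e/e') is regular: (a) for every α > 0, e ↦ φ(e, αe) is strictly increasing on ℝ_{++}; and (b) either for every compact interval I ⊂ ℝ_{++} and all a, b, y ∈ I there is M > 0 with φ(a,x) > φ(b,y) for all x > M, or for every compact interval I ⊂ ℝ_{++} and all a, b, y ∈ I there is m > 0 with φ(a,x) > φ(b,y) for all x < m. -/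
open Filter Set MeasureTheory

noncomputable section

/-- An expenditure-augmented utility function: strictly increasing in the (nonpositive)
last argument. -/
def IsAugUtility {K : ℕ} (V : (Fin K → ℝ) → ℝ → ℝ) : Prop :=
  ∀ x : Fin K → ℝ, (∀ k, 0 ≤ x k) → StrictMonoOn (V x) (Set.Iic (0 : ℝ))

/-- A regular behavioral expenditure function. -/
def RegularBEF (φ : ℝ → ℝ → ℝ) : Prop :=
  (∀ α : ℝ, 0 < α → ∀ e e' : ℝ, 0 < e → e < e' → φ e (α * e) < φ e' (α * e')) ∧
  ((∀ lo hi : ℝ, 0 < lo → ∀ a b y : ℝ, a ∈ Set.Icc lo hi → b ∈ Set.Icc lo hi →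
      y ∈ Set.Icc lo hi → ∃ M : ℝ, 0 < M ∧ ∀ x : ℝ, M < x → φ b y < φ a x) ∨
   (∀ lo hi : ℝ, 0 < lo → ∀ a b y : ℝ, a ∈ Set.Icc lo hi → b ∈ Set.Icc lo hi →
      y ∈ Set.Icc lo hi → ∃ m : ℝ, 0 < m ∧ ∀ x : ℝ, 0 < x → x < m → φ b y < φ a x))

/-- Heterogenous prices `p` AU-rationalize the data set with respect to the behavioral
expenditure function `φ`: a common augmented utility `V` such that each observed bundle
`x^{i,t} = x(e^{i,t}, p̄^t)` maximizes `x ↦ V(x, -φ(p̄^t·x, p^{i,t}·x))`. -/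
def AUPricesRationalize {N T K : ℕ} (e : Fin N → Fin T → Fin K → ℝ)
    (pbar : Fin T → Fin K → ℝ) (p : Fin N → Fin T → Fin K → ℝ)
    (φ : ℝ → ℝ → ℝ) : Prop :=
  ∃ V : (Fin K → ℝ) → ℝ → ℝ, IsAugUtility V ∧
    ∀ i t, ∀ x : Fin K → ℝ, (∀ k, 0 ≤ x k) →
      V x (-(φ (dotp (pbar t) x) (dotp (p i t) x))) ≤
        V (demandOf (e i t) (pbar t))
          (-(φ (dotp (pbar t) (demandOf (e i t) (pbar t)))
              (dotp (p i t) (demandOf (e i t) (pbar t)))))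

/-- The data set is AU-rationalizable with heterogenous preferences. -/
def AUHetPrefRationalize {N T K : ℕ} (e : Fin N → Fin T → Fin K → ℝ)
    (pbar : Fin T → Fin K → ℝ) : Prop :=
  ∃ V : Fin N → (Fin K → ℝ) → ℝ → ℝ, (∀ i, IsAugUtility (V i)) ∧
    ∀ i t, ∀ x : Fin K → ℝ, (∀ k, 0 ≤ x k) →
      V i x (-(dotp (pbar t) x)) ≤
        V i (demandOf (e i t) (pbar t)) (-(dotp (pbar t) (demandOf (e i t) (pbar t))))

/-- if `f : ℝ_{++} → ℝ_{++}` is continuous and diverges to `∞` either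
at `0⁺` or at `∞`, then the behavioral expenditure function `φ(e, e') = e·f(e/e')` is
regular. -/
theorem reference_price_regular (f : ℝ → ℝ)
    (hf : ∀ r : ℝ, 0 < r → 0 < f r)
    (hcont : ContinuousOn f (Set.Ioi 0))
    (hlim : Tendsto f (nhdsWithin 0 (Set.Ioi 0)) atTop ∨ Tendsto f atTop atTop) :
    RegularBEF (fun e e' => e * f (e / e')) := by
  constructor
  · intro α hα e e' he hee'
    have he' : (0:ℝ) < e' := he.trans hee'
    have h1 : e / (α * e) = 1/α := by field_simp
    have h2 : e' / (α * e') = 1/α := by field_simp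
    simp only [h1, h2]
    exact mul_lt_mul_of_pos_right hee' (hf (1/α) (by positivity))
  · rcases hlim with h0 | hinf
    · left
      intro lo hi hlo a b y ha hb hy
      have hapos : 0 < a := lt_of_lt_of_le hlo ha.1
      have h1 : Tendsto (fun x : ℝ => a / x) atTop (nhdsWithin 0 (Set.Ioi 0)) := by
        apply tendsto_nhdsWithin_of_tendsto_nhds_of_eventually_within
        · exact tendsto_const_nhds.div_atTop tendsto_id
        · filter_upwards [eventually_gt_atTop (0:ℝ)] with x hx
          exact div_pos hapos hx
      have h2 : Tendsto (fun x => a * f (a / x)) atTop atTop :=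
        (h0.comp h1).const_mul_atTop hapos
      obtain ⟨M, hM⟩ := (h2.eventually_gt_atTop (b * f (b / y))).exists_forall_of_atTop
      refine ⟨max M 1, lt_of_lt_of_le one_pos (le_max_right _ _), fun x hx => ?_⟩
      exact hM x (le_of_lt (lt_of_le_of_lt (le_max_left _ _) hx))
    · right
      intro lo hi hlo a b y ha hb hy
      have hapos : 0 < a := lt_of_lt_of_le hlo ha.1
      have h1 : Tendsto (fun x : ℝ => a / x) (nhdsWithin 0 (Set.Ioi 0)) atTop := by
        simpa [div_eq_mul_inv] using tendsto_inv_nhdsGT_zero.const_mul_atTop hapos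
      have h2 : Tendsto (fun x => a * f (a / x)) (nhdsWithin 0 (Set.Ioi 0)) atTop :=
        (hinf.comp h1).const_mul_atTop hapos
      have h3 := h2.eventually_gt_atTop (b * f (b / y))
      rw [(nhdsGT_basis (0:ℝ)).eventually_iff] at h3
      obtain ⟨m, hm, hmem⟩ := h3
      exact ⟨m, hm, fun x hx1 hx2 => hmem ⟨hx1, hx2⟩⟩
end
end

section
/- Let E = {(e^{i,t})_{i∈N}, p̄^t}_{t∈T} be a data set and R ⊆ K a nonempty subset such that e^{i,t}_k > 0 for all (i,t) ∈ N×T and all k ∈ R. Then there exists ε̄ ∈ (0,1) such that for every ε ∈ (0, ε̄) and every β > 0 the following holds: setting λ_i = β ε^i and p^{i,t}_k = λ_i p̄^t_k for k ∈ R, p^{i,t}_k = p̄^t_k for k ∉ R, one has p^{j,s} · x(e^{i,t}, p^{i,t}) > m^{j,s} for all i, j ∈ N with i > j and all s, t ∈ T. In particular, x(e^{j,s}, p^{j,s}) is never directly revealed preferred to x(e^{i,t}, p^{i,t}) when i > j, so no revealed-preference cycle in {(x(e^{i,t}, p^{i,t}), p^{i,t})}_{(i,t)∈N×T} involves observations of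 two different consumers. -/
open Filter Set MeasureTheory

noncomputable section

/-- for small enough `ε`, the geometric scales `λ_i = β ε^i` make the
budget sets of different consumers so distinct that the bundle of a consumer with a
higher index is never affordable (hence never directly revealed dominated) for a
consumer with a lower index. -/
theorem geometric_scales_separate {N T K : ℕ}
    (e : Fin N → Fin T → Fin K → ℝ) (pbar : Fin T → Fin K → ℝ)
    (hds : IsDataset e pbar)
    (R : Finset (Fin K)) (hR : R.Nonempty)
    (hpos : ∀ i t, ∀ k ∈ R, 0 < e i t k) :
    ∃ εbar : ℝ, 0 < εbar ∧ εbar < 1 ∧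
      ∀ ε : ℝ, 0 < ε → ε < εbar → ∀ β : ℝ, 0 < β →
        ∀ i j : Fin N, j < i → ∀ s t : Fin T,
          ((∑ k, e j s k) <
            dotp (fun k => if k ∈ R then (β * ε ^ ((j : ℕ) + 1)) * pbar s k else pbar s k)
              (demandOf (e i t)
                (fun k => if k ∈ R then (β * ε ^ ((i : ℕ) + 1)) * pbar t k else pbar t k))) ∧
          ¬ RevD
              (fun a : Fin N × Fin T => demandOf (e a.1 a.2)
                (fun k => if k ∈ R then (β * ε ^ ((a.1 : ℕ) + 1)) * pbar a.2 k else pbar a.2 k))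
              (fun a : Fin N × Fin T =>
                fun k => if k ∈ R then (β * ε ^ ((a.1 : ℕ) + 1)) * pbar a.2 k else pbar a.2 k)
              (j, s) (i, t) := by
  obtain ⟨he0, hm, hp⟩ := hds
  by_cases hNT : Nonempty (Fin N) ∧ Nonempty (Fin T)
  · obtain ⟨hN, hT⟩ := hNT
    have hneNTT : (Finset.univ : Finset (Fin N × Fin T × Fin T)).Nonempty := Finset.univ_nonempty
    have hneNT : (Finset.univ : Finset (Fin N × Fin T)).Nonempty := Finset.univ_nonempty
    set c : ℝ := Finset.univ.inf' hneNTT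
      (fun a : Fin N × Fin T × Fin T => ∑ k ∈ R, pbar a.2.1 k * (e a.1 a.2.2 k / pbar a.2.2 k))
      with hcdef
    have hc : 0 < c := by
      rw [hcdef, Finset.lt_inf'_iff]
      intro a _
      exact Finset.sum_pos
        (fun k hk => mul_pos (hp _ _) (div_pos (hpos _ _ _ hk) (hp _ _))) hR
    set M : ℝ := Finset.univ.sup' hneNT (fun a : Fin N × Fin T => ∑ k, e a.1 a.2 k) with hMdef
    have hMle : ∀ j s, (∑ k, e j s k) ≤ M := fun j s => by
      exact Finset.le_sup' (fun a : Fin N × Fin T => ∑ k, e a.1 a.2 k)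
        (Finset.mem_univ (j, s))
    have hM : 0 < M :=
      lt_of_lt_of_le (hm (Classical.arbitrary _) (Classical.arbitrary _)) (hMle _ _)
    refine ⟨min (1/2) (c / (2 * M)), lt_min (by norm_num) (by positivity),
      lt_of_le_of_lt (min_le_left _ _) (by norm_num), ?_⟩
    intro ε hε hεlt β hβ i j hji s t
    have hε1 : ε < 1 := lt_of_lt_of_le hεlt (le_trans (min_le_left _ _) (by norm_num))
    have hjilt : (j : ℕ) < (i : ℕ) := hji
    have hPjpos : ∀ k, 0 < (if k ∈ R then (β * ε ^ ((j : ℕ) + 1)) * pbar s k else pbar s k) := by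
      intro k; split
      · exact mul_pos (mul_pos hβ (pow_pos hε _)) (hp _ _)
      · exact hp _ _
    have hPipos : ∀ k, 0 < (if k ∈ R then (β * ε ^ ((i : ℕ) + 1)) * pbar t k else pbar t k) := by
      intro k; split
      · exact mul_pos (mul_pos hβ (pow_pos hε _)) (hp _ _)
      · exact hp _ _
    -- ratio bound
    have hrr : (1:ℝ)/ε ≤ ε ^ ((j:ℕ)+1) / ε ^ ((i:ℕ)+1) := by
      rw [div_le_div_iff₀ hε (pow_pos hε _)]
      calc 1 * ε ^ ((i:ℕ)+1) = ε ^ ((i:ℕ)+1) := one_mul _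
        _ ≤ ε ^ ((j:ℕ)+2) := pow_le_pow_of_le_one hε.le hε1.le (by omega)
        _ = ε ^ ((j:ℕ)+1) * ε := pow_succ _ _
    have hcle : c ≤ ∑ k ∈ R, pbar s k * (e i t k / pbar t k) := by
      exact Finset.inf'_le
        (fun a : Fin N × Fin T × Fin T => ∑ k ∈ R, pbar a.2.1 k * (e a.1 a.2.2 k / pbar a.2.2 k))
        (Finset.mem_univ (i, s, t))
    have key : (∑ k, e j s k) <
        dotp (fun k => if k ∈ R then (β * ε ^ ((j : ℕ) + 1)) * pbar s k else pbar s k)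
          (demandOf (e i t)
            (fun k => if k ∈ R then (β * ε ^ ((i : ℕ) + 1)) * pbar t k else pbar t k)) := by
      have hsum : ∑ k ∈ R, (ε ^ ((j:ℕ)+1) / ε ^ ((i:ℕ)+1)) * (pbar s k * (e i t k / pbar t k)) ≤
          dotp (fun k => if k ∈ R then (β * ε ^ ((j : ℕ) + 1)) * pbar s k else pbar s k)
            (demandOf (e i t)
              (fun k => if k ∈ R then (β * ε ^ ((i : ℕ) + 1)) * pbar t k else pbar t k)) := by
        unfold dotp demandOf
        refine le_trans (le_of_eq (Finset.sum_congr rfl ?_))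
          (Finset.sum_le_sum_of_subset_of_nonneg (Finset.subset_univ R) ?_)
        · intro k hk
          simp only [if_pos hk]
          have h1 : pbar t k ≠ 0 := (hp t k).ne'
          have h2 : β ≠ 0 := hβ.ne'
          have h3 : (ε:ℝ) ≠ 0 := hε.ne'
          field_simp
        · intro k _ _
          exact mul_nonneg (hPjpos k).le (div_nonneg (he0 _ _ _) (hPipos k).le)
      have hfac : ∑ k ∈ R, (ε ^ ((j:ℕ)+1) / ε ^ ((i:ℕ)+1)) * (pbar s k * (e i t k / pbar t k))
          = (ε ^ ((j:ℕ)+1) / ε ^ ((i:ℕ)+1)) * ∑ k ∈ R, pbar s k * (e i t k / pbar t k) :=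
        (Finset.mul_sum _ _ _).symm
      have hrpos : (0:ℝ) ≤ 1/ε := by positivity
      have hstep : c / ε ≤ ∑ k ∈ R, (ε ^ ((j:ℕ)+1) / ε ^ ((i:ℕ)+1)) * (pbar s k * (e i t k / pbar t k)) := by
        rw [hfac]
        calc c / ε = (1/ε) * c := by ring
          _ ≤ (ε ^ ((j:ℕ)+1) / ε ^ ((i:ℕ)+1)) * ∑ k ∈ R, pbar s k * (e i t k / pbar t k) :=
            mul_le_mul hrr hcle hc.le (le_trans hrpos hrr)
      have hεsmall : ε < c / (2*M) := lt_of_lt_of_le hεlt (min_le_right _ _)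
      have h2M : 2*M < c / ε := by
        rw [lt_div_iff₀ hε]
        have := (lt_div_iff₀ (by positivity : (0:ℝ) < 2*M)).mp hεsmall
        nlinarith
      have hmle := hMle j s
      linarith
    refine ⟨key, ?_⟩
    intro hrev
    simp only [RevD] at hrev
    have hself : dotp (fun k => if k ∈ R then (β * ε ^ ((j : ℕ) + 1)) * pbar s k else pbar s k)
        (demandOf (e j s)
          (fun k => if k ∈ R then (β * ε ^ ((j : ℕ) + 1)) * pbar s k else pbar s k))
        = ∑ k, e j s k := by
      unfold dotp demandOf
      refine Finset.sum_congr rfl fun k _ => ?_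
      rw [mul_comm, div_mul_cancel₀ _ (hPjpos k).ne']
    rw [hself] at hrev
    exact absurd key (not_lt.mpr hrev)
  · refine ⟨1/2, by norm_num, by norm_num, ?_⟩
    intro ε hε hεlt β hβ i j hji s t
    exact absurd ⟨⟨i⟩, ⟨s⟩⟩ hNT
end
end
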